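/- arXiv:2205.14487 — 4 statements merged into one kernel-verified Lean document; each statement's English description precedes it below -/
import Mathlib

section
/- Consider the Gaussian 1-factor model Z_j = α_j W + ψ_j ε_j, j = 1,2,…, where W, ε₁, ε₂, … are i.i.d. N(0,1), the loadings satisfy −1 < liminf_j α_j ≤ limsup_j α_j < 1 (uniformly bounded away from ±1), ψ_j = √(1−α_j²), and q̄_D := D⁻¹ Σ_{j=1}^D α_j²/ψ_j² → q > 0 as D → ∞ (equivalently, D⁻¹ Σ_{j=1}^D |α_j| converges to a nonzero constant, with the limit for q̄_D existing under sampling from a super-population). Let w̃_D = (1+q_D)⁻¹ A_Dᵀ Ψ_D⁻² Z_D with q_D = Σ_{j=1}^D α_j²/ψ_j² be the regression factor score. Then w̃_D − W = O_p(D^{−1/2}); that is, the sequence √D (w̃_D − W) is bounded in probability. Moreover, √D (w̃_D − W) converges in distribution to N(0, q⁻¹). -/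
open MeasureTheory ProbabilityTheory Filter
open scoped NNReal ENNReal

namespace GaussAux
open Real




lemma const_eq (v w : ℝ) (hv' : 0 < v) (hw' : 0 < w) :
    (Real.sqrt (2 * π * v))⁻¹ * (Real.sqrt (2 * π * w))⁻¹ =
      (Real.sqrt (2 * π * (v + w)))⁻¹ / Real.sqrt (π / ((v + w) / (2 * v * w))) := by
  rw [div_eq_mul_inv, ← mul_inv, ← mul_inv]
  congr 1
  rw [← Real.sqrt_mul (by positivity), ← Real.sqrt_mul (by positivity)]
  congr 1
  have hvw : (0:ℝ) < v + w := by linarith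
  field_simp

lemma exp_eq (v w y x : ℝ) (hv' : 0 < v) (hw' : 0 < w) :
     -x ^ 2 / (2 * v) + -(y - x) ^ 2 / (2 * w) =
      -(y - 0) ^ 2 / (2 * (v + w)) +
        (-((v + w) / (2 * v * w)) * (x - v * y / (v + w)) ^ 2) := by
  have hvw : (0:ℝ) < v + w := by linarith
  field_simp
  ring

lemma pdf_mul_eq (v w : ℝ≥0) (hv : v ≠ 0) (hw : w ≠ 0) (y x : ℝ) :
    gaussianPDFReal 0 v x * gaussianPDFReal x w y =
      (gaussianPDFReal 0 (v + w) y / Real.sqrt (π / (((v:ℝ) + w) / (2 * v * w)))) *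
        Real.exp (-(((v:ℝ) + w) / (2 * v * w)) * (x - (v:ℝ) * y / ((v:ℝ) + w)) ^ 2) := by
  have hv' : (0:ℝ) < v := lt_of_le_of_ne v.2 (by exact_mod_cast Ne.symm hv)
  have hw' : (0:ℝ) < w := lt_of_le_of_ne w.2 (by exact_mod_cast Ne.symm hw)
  simp only [gaussianPDFReal, NNReal.coe_add, sub_zero]
  rw [mul_mul_mul_comm, ← Real.exp_add]
  rw [show (-x ^ 2 / (2 * (v:ℝ)) + -(y - x) ^ 2 / (2 * (w:ℝ))) =
      (-(y - 0) ^ 2 / (2 * ((v:ℝ) + w)) +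
        (-(((v:ℝ) + w) / (2 * v * w)) * (x - (v:ℝ) * y / ((v:ℝ) + w)) ^ 2))
      from exp_eq _ _ _ _ hv' hw']
  rw [const_eq _ _ hv' hw', Real.exp_add]
  ring

lemma integrable_pdf_mul (v w : ℝ≥0) (hv : v ≠ 0) (hw : w ≠ 0) (y : ℝ) :
    Integrable (fun x => gaussianPDFReal 0 v x * gaussianPDFReal x w y) := by
  have hv' : (0:ℝ) < v := lt_of_le_of_ne v.2 (by exact_mod_cast Ne.symm hv)
  have hw' : (0:ℝ) < w := lt_of_le_of_ne w.2 (by exact_mod_cast Ne.symm hw)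
  have hb : (0:ℝ) < ((v:ℝ) + w) / (2 * v * w) := by positivity
  have heq : (fun x => gaussianPDFReal 0 v x * gaussianPDFReal x w y) =
      fun x => (gaussianPDFReal 0 (v + w) y / Real.sqrt (π / (((v:ℝ) + w) / (2 * v * w)))) *
        Real.exp (-(((v:ℝ) + w) / (2 * v * w)) * (x - (v:ℝ) * y / ((v:ℝ) + w)) ^ 2) :=
    funext fun x => pdf_mul_eq v w hv hw y x
  rw [heq]
  exact ((integrable_exp_neg_mul_sq hb).comp_sub_right ((v:ℝ) * y / ((v:ℝ) + w))).const_mul _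

lemma integral_pdf_mul (v w : ℝ≥0) (hv : v ≠ 0) (hw : w ≠ 0) (y : ℝ) :
    ∫ x, gaussianPDFReal 0 v x * gaussianPDFReal x w y = gaussianPDFReal 0 (v + w) y := by
  have hv' : (0:ℝ) < v := lt_of_le_of_ne v.2 (by exact_mod_cast Ne.symm hv)
  have hw' : (0:ℝ) < w := lt_of_le_of_ne w.2 (by exact_mod_cast Ne.symm hw)
  have hb : (0:ℝ) < ((v:ℝ) + w) / (2 * v * w) := by positivity
  have hπb : (0:ℝ) < π / (((v:ℝ) + w) / (2 * v * w)) := by positivity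
  have heq : (fun x => gaussianPDFReal 0 v x * gaussianPDFReal x w y) =
      fun x => (gaussianPDFReal 0 (v + w) y / Real.sqrt (π / (((v:ℝ) + w) / (2 * v * w)))) *
        Real.exp (-(((v:ℝ) + w) / (2 * v * w)) * (x - (v:ℝ) * y / ((v:ℝ) + w)) ^ 2) :=
    funext fun x => pdf_mul_eq v w hv hw y x
  rw [heq, integral_const_mul,
    integral_sub_right_eq_self
      (fun x : ℝ => Real.exp (-(((v:ℝ) + w) / (2 * v * w)) * x ^ 2)) _,
    integral_gaussian, div_mul_cancel₀]
  exact (Real.sqrt_ne_zero'.mpr hπb)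



lemma measurable_pdf2 (w : ℝ≥0) : Measurable (fun p : ℝ × ℝ => gaussianPDF p.1 w p.2) := by
  have : (fun p : ℝ × ℝ => gaussianPDF p.1 w p.2) =
      fun p : ℝ × ℝ => gaussianPDF 0 w (p.2 - p.1) := by
    funext p
    unfold gaussianPDF
    rw [gaussianPDFReal_sub, zero_add]
  rw [this]
  exact (measurable_gaussianPDF 0 w).comp (measurable_snd.sub measurable_fst)

lemma gaussian_prod_map_add (v w : ℝ≥0) :
    ((gaussianReal 0 v).prod (gaussianReal 0 w)).map (fun p : ℝ × ℝ => p.1 + p.2)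
      = gaussianReal 0 (v + w) := by
  by_cases hv : v = 0
  · subst hv
    rw [gaussianReal_zero_var, Measure.dirac_prod, Measure.map_map measurable_add
      measurable_prodMk_left]
    simp [Function.comp_def, zero_add, Measure.map_id]
  by_cases hw : w = 0
  · subst hw
    rw [gaussianReal_zero_var, Measure.prod_dirac, Measure.map_map measurable_add
      measurable_prodMk_right]
    simp [Function.comp_def, add_zero, Measure.map_id]
  have hvw : v + w ≠ 0 := by simp [hv]
  ext s hs
  rw [Measure.map_apply measurable_add hs, Measure.prod_apply (measurable_add hs)]
  have h1 : ∀ x : ℝ, (gaussianReal 0 w) (Prod.mk x ⁻¹' ((fun p : ℝ × ℝ => p.1 + p.2) ⁻¹' s))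
      = ∫⁻ y in s, gaussianPDF x w y := by
    intro x
    have hpre : Prod.mk x ⁻¹' ((fun p : ℝ × ℝ => p.1 + p.2) ⁻¹' s) = (fun y => x + y) ⁻¹' s := rfl
    rw [hpre, ← Measure.map_apply (measurable_const_add x) hs,
      gaussianReal_map_const_add, zero_add, gaussianReal_apply _ hw]
  simp_rw [h1]
  have hmeasInt : Measurable fun x => ∫⁻ y in s, gaussianPDF x w y :=
    Measurable.lintegral_prod_right (measurable_pdf2 w)
  rw [gaussianReal_of_var_ne_zero _ hv,
    lintegral_withDensity_eq_lintegral_mul _ (measurable_gaussianPDF 0 v) hmeasInt]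
  have h2 : ∀ x : ℝ, ((gaussianPDF 0 v) * fun x => ∫⁻ y in s, gaussianPDF x w y) x
      = ∫⁻ y in s, gaussianPDF 0 v x * gaussianPDF x w y := by
    intro x
    simp only [Pi.mul_apply]
    exact (lintegral_const_mul' _ _ ENNReal.ofReal_ne_top).symm
  simp_rw [h2]
  rw [lintegral_lintegral_swap (((measurable_gaussianPDF 0 v).comp measurable_fst).mul
    (measurable_pdf2 w)).aemeasurable]
  have h3 : ∀ y : ℝ, ∫⁻ x, gaussianPDF 0 v x * gaussianPDF x w y = gaussianPDF 0 (v + w) y := by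
    intro y
    have : ∀ x : ℝ, gaussianPDF 0 v x * gaussianPDF x w y
        = ENNReal.ofReal (gaussianPDFReal 0 v x * gaussianPDFReal x w y) := fun x =>
      (ENNReal.ofReal_mul (gaussianPDFReal_nonneg 0 v x)).symm
    simp_rw [this]
    rw [← ofReal_integral_eq_lintegral_ofReal (integrable_pdf_mul v w hv hw y)
      (Filter.Eventually.of_forall fun x => mul_nonneg (gaussianPDFReal_nonneg _ _ _)
        (gaussianPDFReal_nonneg _ _ _)),
      integral_pdf_mul v w hv hw y]
    rfl
  simp_rw [h3]
  exact (gaussianReal_apply _ hvw s).symm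



variable {Ω : Type*} [MeasurableSpace Ω] {μ : Measure Ω} [IsProbabilityMeasure μ]

lemma indep_gaussian_add {S T : Ω → ℝ} (hS : Measurable S) (hT : Measurable T)
    (h : IndepFun S T μ) {a b : ℝ≥0} (ha : μ.map S = gaussianReal 0 a)
    (hb : μ.map T = gaussianReal 0 b) :
    μ.map (fun ω => S ω + T ω) = gaussianReal 0 (a + b) := by
  have hpair : μ.map (fun ω => (S ω, T ω)) = (μ.map S).prod (μ.map T) :=
    (indepFun_iff_map_prod_eq_prod_map_map hS.aemeasurable hT.aemeasurable).mp h
  have : (fun ω => S ω + T ω) = (fun p : ℝ × ℝ => p.1 + p.2) ∘ (fun ω => (S ω, T ω)) := rfl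
  rw [this, ← Measure.map_map measurable_add (hS.prodMk hT), hpair, ha, hb,
    gaussian_prod_map_add]

lemma map_const_mul_gaussian {T : Ω → ℝ} (hT : Measurable T) {a : ℝ≥0} (c : ℝ)
    (ha : μ.map T = gaussianReal 0 a) :
    μ.map (fun ω => c * T ω) = gaussianReal 0 (NNReal.mk (c ^ 2) (sq_nonneg c) * a) := by
  have : (fun ω => c * T ω) = (fun x : ℝ => c * x) ∘ T := rfl
  rw [this, ← Measure.map_map (measurable_const_mul c) hT, ha, gaussianReal_map_const_mul,
    mul_zero]

lemma map_sum_gaussian (X : ℕ → Ω → ℝ) (hmeas : ∀ n, Measurable (X n))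
    (hindep : iIndepFun X μ)
    (hlaw : ∀ n, μ.map (X n) = gaussianReal 0 1) (c : ℕ → ℝ) (n : ℕ) :
    μ.map (fun ω => ∑ j ∈ Finset.range n, c j * X j ω)
      = gaussianReal 0 (∑ j ∈ Finset.range n, NNReal.mk (c j ^ 2) (sq_nonneg (c j))) := by
  have hYmeas : ∀ j, Measurable (fun ω => c j * X j ω) := fun j =>
    (hmeas j).const_mul (c j)
  have hYindep : iIndepFun (fun j ω => c j * X j ω) μ := by
    have := hindep.comp (fun j (x : ℝ) => c j * x) (fun j => measurable_const_mul (c j))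
    exact this
  have hYlaw : ∀ j, μ.map (fun ω => c j * X j ω) = gaussianReal 0 (NNReal.mk (c j ^ 2) (sq_nonneg (c j))) := by
    intro j
    rw [map_const_mul_gaussian (hmeas j) (c j) (hlaw j), mul_one]
  induction n with
  | zero =>
      simp only [Finset.range_zero, Finset.sum_empty]
      rw [show (fun _ : Ω => (0:ℝ)) = fun _ => (0:ℝ) from rfl, Measure.map_const,
        measure_univ, one_smul, gaussianReal_zero_var]
  | succ n ih =>
      have hsum : (fun ω => ∑ j ∈ Finset.range (n+1), c j * X j ω)
          = fun ω => (∑ j ∈ Finset.range n, c j * X j ω) + c n * X n ω := by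
        funext ω; exact Finset.sum_range_succ _ n
      have hindepSn : IndepFun (∑ j ∈ Finset.range n, fun ω => c j * X j ω)
          (fun ω => c n * X n ω) μ :=
        hYindep.indepFun_finset_sum_of_notMem hYmeas (by simp)
      have hSmeas : Measurable (fun ω => ∑ j ∈ Finset.range n, c j * X j ω) :=
        Finset.measurable_sum _ (fun j _ => hYmeas j)
      have hindepSn' : IndepFun (fun ω => ∑ j ∈ Finset.range n, c j * X j ω)
          (fun ω => c n * X n ω) μ := by
        have : (∑ j ∈ Finset.range n, fun ω => c j * X j ω)
            = fun ω => ∑ j ∈ Finset.range n, c j * X j ω := by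
          funext ω; simp [Finset.sum_apply]
        rwa [this] at hindepSn
      rw [hsum, Finset.sum_range_succ]
      exact indep_gaussian_add hSmeas (hYmeas n) hindepSn' ih (hYlaw n)


/-- coefficients `(-1, α 0 / ψ 0, α 1 / ψ 1, …)`. -/
noncomputable def cc (α ψ : ℕ → ℝ) : ℕ → ℝ := fun n => Nat.casesOn n (-1) (fun k => α k / ψ k)

@[simp] lemma cc_zero (α ψ : ℕ → ℝ) : cc α ψ 0 = -1 := rfl
@[simp] lemma cc_succ (α ψ : ℕ → ℝ) (k : ℕ) : cc α ψ (k + 1) = α k / ψ k := rfl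

lemma gaussianReal_eq_map_sqrt (u : ℝ≥0) :
    (gaussianReal 0 1).map (fun x : ℝ => Real.sqrt u * x) = gaussianReal 0 u := by
  have h := gaussianReal_map_const_mul (μ := 0) (v := 1) (Real.sqrt u)
  have h2 : NNReal.mk (Real.sqrt u ^ 2) (sq_nonneg _) * 1 = u := by
    ext
    simp [Real.sq_sqrt u.2]
  rw [show ((fun x : ℝ => Real.sqrt u * x)) = (Real.sqrt u * ·) from rfl, h, mul_zero, h2]


end GaussAux

/-!
STATEMENT 7: Gaussian 1-factor model `Z_j = α_j W + ψ_j ε_j` with `W, ε₁, ε₂, …` i.i.d.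
`N(0,1)`, loadings in `(−1,1)` with `−1 < liminf α_j ≤ limsup α_j < 1`,
`ψ_j = √(1−α_j²)`, and `q̄_D = D⁻¹ Σ_{j<D} α_j²/ψ_j² → q > 0`.  Then the regression
factor score `w̃_D = (1+q_D)⁻¹ Σ_{j<D} (α_j/ψ_j²) Z_j` satisfies
`w̃_D − W = O_p(D^{−1/2})` and `√D (w̃_D − W)` converges in distribution to `N(0, q⁻¹)`.
-/

open MeasureTheory ProbabilityTheory Filter

/-- `X_D = O_p(a_D)`: for every `ε > 0` there is `M > 0` such that
`P(|X_D| > M a_D) < ε` for all sufficiently large `D`. -/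
def IsBigOp {Ω : Type*} [MeasurableSpace Ω] (μ : Measure Ω)
    (X : ℕ → Ω → ℝ) (a : ℕ → ℝ) : Prop :=
  ∀ ε : ℝ, 0 < ε → ∃ M : ℝ, 0 < M ∧
    ∀ᶠ D in atTop, μ {ω | M * a D < |X D ω|} < ENNReal.ofReal ε

theorem one_factor_gaussian_factor_score_consistency
    {Ω : Type*} [MeasurableSpace Ω] (μ : Measure Ω) [IsProbabilityMeasure μ]
    (W : Ω → ℝ) (ε : ℕ → Ω → ℝ)
    (hW : Measurable W) (hε : ∀ j, Measurable (ε j))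
    -- the combined family `(W, ε₀, ε₁, …)` is mutually independent, each `N(0,1)`
    (X : ℕ → Ω → ℝ) (hX0 : X 0 = W) (hXs : ∀ j, X (j + 1) = ε j)
    (hindep : iIndepFun X μ)
    (hlaw : ∀ n, μ.map (X n) = gaussianReal 0 1)
    (α : ℕ → ℝ) (hα : ∀ j, |α j| < 1)
    (hliminf : -1 < Filter.liminf α atTop)
    (hlimsup : Filter.limsup α atTop < 1)
    (ψ : ℕ → ℝ) (hψ : ∀ j, ψ j = Real.sqrt (1 - α j ^ 2))
    (q : NNReal) (hqpos : 0 < q)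
    (hq : Tendsto (fun D : ℕ => (D : ℝ)⁻¹ * ∑ j ∈ Finset.range D, α j ^ 2 / ψ j ^ 2)
      atTop (nhds (q : ℝ)))
    (Z : ℕ → Ω → ℝ) (hZ : ∀ j ω, Z j ω = α j * W ω + ψ j * ε j ω)
    (qD : ℕ → ℝ) (hqD : ∀ D, qD D = ∑ j ∈ Finset.range D, α j ^ 2 / ψ j ^ 2)
    (wt : ℕ → Ω → ℝ)
    (hwt : ∀ D ω,
      wt D ω = (1 + qD D)⁻¹ * ∑ j ∈ Finset.range D, (α j / ψ j ^ 2) * Z j ω) :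
    IsBigOp μ (fun D ω => wt D ω - W ω) (fun D => (D : ℝ) ^ (-(1 / 2 : ℝ))) ∧
    -- convergence in distribution of `√D (w̃_D − W)` to `N(0, q⁻¹)`
    (∀ f : BoundedContinuousFunction ℝ ℝ,
      Tendsto (fun D : ℕ => ∫ ω, f (Real.sqrt D * (wt D ω - W ω)) ∂μ) atTop
        (nhds (∫ x, f x ∂(gaussianReal 0 q⁻¹)))) := by
  clear hliminf hlimsup
  -- basic facts
  have hα2 : ∀ j, α j ^ 2 < 1 := by
    intro j
    have h1 := hα j
    nlinarith [sq_abs (α j), abs_nonneg (α j)]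
  have hψpos : ∀ j, 0 < ψ j := by
    intro j
    rw [hψ j]
    exact Real.sqrt_pos.mpr (by linarith [hα2 j])
  have hψne : ∀ j, ψ j ≠ 0 := fun j => ne_of_gt (hψpos j)
  have hq0 : (0:ℝ) < q := hqpos
  have hqD0 : ∀ D, 0 ≤ qD D := by
    intro D
    rw [hqD]
    exact Finset.sum_nonneg fun j _ => by positivity
  have h1q : ∀ D, (0:ℝ) < 1 + qD D := fun D => by linarith [hqD0 D]
  have h1qne : ∀ D, (1:ℝ) + qD D ≠ 0 := fun D => ne_of_gt (h1q D)
  have hmeasX : ∀ n, Measurable (X n) := by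
    intro n
    cases n with
    | zero => rw [hX0]; exact hW
    | succ k => rw [hXs]; exact hε k
  set c : ℕ → ℝ := GaussAux.cc α ψ with hc
  -- sums of the model
  have hdiff : ∀ D ω, wt D ω - W ω
      = (1 + qD D)⁻¹ * ∑ j ∈ Finset.range (D + 1), c j * X j ω := by
    intro D ω
    have hterm : ∀ j ∈ Finset.range D,
        (α j / ψ j ^ 2) * Z j ω = (α j ^ 2 / ψ j ^ 2) * W ω + (α j / ψ j) * ε j ω := by
      intro j _
      rw [hZ]
      have := hψne j
      field_simp
    have hsum : ∑ j ∈ Finset.range (D + 1), c j * X j ω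
        = (∑ j ∈ Finset.range D, (α j / ψ j) * ε j ω) + (-1) * W ω := by
      rw [Finset.sum_range_succ']
      simp only [hc, GaussAux.cc_succ, GaussAux.cc_zero, hX0, hXs]
    rw [hwt, Finset.sum_congr rfl hterm, Finset.sum_add_distrib, ← Finset.sum_mul, ← hqD, hsum]
    have hne := h1qne D
    set T := ∑ j ∈ Finset.range D, (α j / ψ j) * ε j ω with hT
    field_simp
    ring
  have hSmeas : ∀ D, Measurable (fun ω => ∑ j ∈ Finset.range (D + 1), c j * X j ω) :=
    fun D => Finset.measurable_sum _ fun j _ => (hmeasX j).const_mul _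
  have hXDmeas : ∀ D, Measurable (fun ω => wt D ω - W ω) := by
    intro D
    have : (fun ω => wt D ω - W ω)
        = fun ω => (1 + qD D)⁻¹ * ∑ j ∈ Finset.range (D + 1), c j * X j ω :=
      funext (hdiff D)
    rw [this]
    exact (hSmeas D).const_mul _
  -- variance bookkeeping
  set VD : ℕ → ℝ≥0 := fun D => ∑ j ∈ Finset.range (D + 1), NNReal.mk (c j ^ 2) (sq_nonneg (c j)) with hVDdef
  have hVD : ∀ D, ((VD D : ℝ≥0) : ℝ) = 1 + qD D := by
    intro D
    rw [hVDdef]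
    push_cast
    rw [Finset.sum_range_succ', hqD]
    simp only [hc, GaussAux.cc_succ, GaussAux.cc_zero]
    rw [add_comm]
    congr 1
    · norm_num
    · exact Finset.sum_congr rfl fun j _ => by rw [div_pow]
  have hmap : ∀ (D : ℕ) (a : ℝ), μ.map (fun ω => a * (wt D ω - W ω))
      = gaussianReal 0 (NNReal.mk ((a * (1 + qD D)⁻¹) ^ 2) (sq_nonneg _) * VD D) := by
    intro D a
    have h1 : (fun ω => a * (wt D ω - W ω))
        = fun ω => (a * (1 + qD D)⁻¹) * ∑ j ∈ Finset.range (D + 1), c j * X j ω := by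
      funext ω
      rw [hdiff D ω]
      ring
    rw [h1]
    have h2 := GaussAux.map_sum_gaussian X hmeasX hindep hlaw c (D + 1)
    have h3 : (fun ω => (a * (1 + qD D)⁻¹) * ∑ j ∈ Finset.range (D + 1), c j * X j ω)
        = (fun x : ℝ => (a * (1 + qD D)⁻¹) * x)
          ∘ (fun ω => ∑ j ∈ Finset.range (D + 1), c j * X j ω) := rfl
    rw [h3, ← Measure.map_map (measurable_const_mul _) (hSmeas D), h2,
      show ((fun x : ℝ => (a * (1 + qD D)⁻¹) * x)) = ((a * (1 + qD D)⁻¹) * ·) from rfl,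
      gaussianReal_map_const_mul, mul_zero]
  -- limit of the normalized variance
  have hq' : Tendsto (fun D : ℕ => (D : ℝ)⁻¹ * qD D) atTop (nhds (q : ℝ)) := by
    simpa only [← hqD] using hq
  constructor
  · -- Big O_p part
    intro ε' hε'
    set s : ℕ → Set ℝ := fun n => {x : ℝ | (n : ℝ) < |x|} with hsdef
    have hsm : ∀ n, MeasurableSet (s n) := fun n =>
      measurableSet_lt measurable_const measurable_id.abs
    have hanti : Antitone s := by
      intro m n hmn x hx
      have : (m : ℝ) ≤ (n : ℝ) := by exact_mod_cast hmn
      exact lt_of_le_of_lt this hx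
    have hiInter : ⋂ n, s n = ∅ := by
      ext x
      simp only [Set.mem_iInter, Set.mem_empty_iff_false, iff_false, not_forall]
      obtain ⟨n, hn⟩ := exists_nat_gt |x|
      exact ⟨n, by simp [hsdef, not_lt.mpr (le_of_lt hn)]⟩
    have htend : Tendsto (fun n => gaussianReal 0 1 (s n)) atTop (nhds 0) := by
      have h := tendsto_measure_iInter_atTop (μ := gaussianReal 0 1)
        (fun n => (hsm n).nullMeasurableSet) hanti ⟨0, measure_ne_top _ _⟩
      rwa [hiInter, measure_empty] at h
    obtain ⟨K, hK⟩ := (htend.eventually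
      (gt_mem_nhds (ENNReal.ofReal_pos.mpr hε'))).exists
    have hsq2 : (0 : ℝ) < Real.sqrt ((q : ℝ) / 2) := Real.sqrt_pos.mpr (by linarith)
    set M : ℝ := ((K : ℝ) + 1) / Real.sqrt ((q : ℝ) / 2) with hMdef
    have hM : 0 < M := by positivity
    refine ⟨M, hM, ?_⟩
    have hup : ∀ᶠ D : ℕ in atTop, (q : ℝ) / 2 < (D : ℝ)⁻¹ * qD D :=
      hq'.eventually (lt_mem_nhds (by linarith))
    filter_upwards [hup, eventually_ge_atTop 1] with D hq2 hD1
    have hD0 : (0 : ℝ) < D := by exact_mod_cast Nat.lt_of_lt_of_le Nat.zero_lt_one hD1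
    set v : ℝ≥0 := NNReal.mk ((1 * (1 + qD D)⁻¹) ^ 2) (sq_nonneg _) * VD D with hvdef
    have hv : (v : ℝ) = (1 + qD D)⁻¹ := by
      rw [hvdef, NNReal.coe_mul, hVD D, NNReal.coe_mk, one_mul]
      have hne := h1qne D
      field_simp
    have hvpos : (0 : ℝ) < v := by rw [hv]; exact inv_pos.mpr (h1q D)
    have hsv : (0 : ℝ) < Real.sqrt v := Real.sqrt_pos.mpr hvpos
    have hlawD : μ.map (fun ω => wt D ω - W ω) = gaussianReal 0 v := by
      have hone : (fun ω => wt D ω - W ω) = fun ω => 1 * (wt D ω - W ω) :=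
        funext fun ω => (one_mul _).symm
      rw [hone]
      exact hmap D 1
    set aD : ℝ := (D : ℝ) ^ (-(1 / 2 : ℝ)) with haDdef
    have haD : aD = (Real.sqrt D)⁻¹ := by
      rw [haDdef, Real.rpow_neg (Nat.cast_nonneg D), Real.sqrt_eq_rpow]
    have hset : MeasurableSet {x : ℝ | M * aD < |x|} :=
      measurableSet_lt measurable_const measurable_id.abs
    -- the key inequality
    have hkey : (K : ℝ) + 1 ≤ M * aD / Real.sqrt v := by
      have hqDle : (q : ℝ) / 2 ≤ (1 + qD D) / D := by
        rw [le_div_iff₀ hD0]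
        have h4 : (D : ℝ)⁻¹ * qD D * D = qD D := by field_simp
        have h5 := mul_lt_mul_of_pos_right hq2 hD0
        linarith
      have hsqle : Real.sqrt ((q : ℝ) / 2) ≤ Real.sqrt ((1 + qD D) / D) :=
        Real.sqrt_le_sqrt hqDle
      have hMaD : M * aD / Real.sqrt v = M * Real.sqrt ((1 + qD D) / D) := by
        rw [hv, haD, Real.sqrt_inv, Real.sqrt_div (le_of_lt (h1q D))]
        field_simp
      rw [hMaD, hMdef]
      calc ((K : ℝ) + 1) = ((K : ℝ) + 1) / Real.sqrt ((q : ℝ) / 2)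
            * Real.sqrt ((q : ℝ) / 2) := by
              rw [div_mul_cancel₀ _ (ne_of_gt hsq2)]
        _ ≤ ((K : ℝ) + 1) / Real.sqrt ((q : ℝ) / 2) * Real.sqrt ((1 + qD D) / D) := by
              have : (0:ℝ) ≤ ((K : ℝ) + 1) / Real.sqrt ((q : ℝ) / 2) := le_of_lt hM
              exact mul_le_mul_of_nonneg_left hsqle this
    have hsub : (fun x : ℝ => Real.sqrt v * x) ⁻¹' {x : ℝ | M * aD < |x|} ⊆ s K := by
      intro x hx
      simp only [Set.mem_preimage, Set.mem_setOf_eq] at hx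
      have habs : |Real.sqrt (v:ℝ) * x| = Real.sqrt (v:ℝ) * |x| := by
        rw [abs_mul, abs_of_nonneg (Real.sqrt_nonneg _)]
      rw [habs] at hx
      have h6 : M * aD / Real.sqrt v < |x| := by
        rw [div_lt_iff₀ hsv]
        linarith [hx]
      have : (K : ℝ) < |x| := by linarith [hkey]
      exact this
    calc μ {ω | M * aD < |wt D ω - W ω|}
        = (μ.map (fun ω => wt D ω - W ω)) {x : ℝ | M * aD < |x|} := by
          rw [Measure.map_apply (hXDmeas D) hset]
          rfl
      _ = ((gaussianReal 0 1).map (fun x : ℝ => Real.sqrt v * x)) {x : ℝ | M * aD < |x|} := by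
          rw [hlawD, GaussAux.gaussianReal_eq_map_sqrt v]
      _ = gaussianReal 0 1 ((fun x : ℝ => Real.sqrt v * x) ⁻¹' {x : ℝ | M * aD < |x|}) := by
          rw [Measure.map_apply (measurable_const_mul _) hset]
      _ ≤ gaussianReal 0 1 (s K) := measure_mono hsub
      _ < ENNReal.ofReal ε' := hK
  · -- convergence in distribution
    intro f
    set uD : ℕ → ℝ≥0 :=
      fun D => NNReal.mk ((Real.sqrt D * (1 + qD D)⁻¹) ^ 2) (sq_nonneg _) * VD D with huDdef
    have huD : ∀ D, ((uD D) : ℝ) = (D : ℝ) * (1 + qD D)⁻¹ := by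
      intro D
      rw [huDdef, NNReal.coe_mul, hVD D, NNReal.coe_mk, mul_pow,
        Real.sq_sqrt (Nat.cast_nonneg D)]
      have hne := h1qne D
      field_simp
    have hγmapD : ∀ D : ℕ,
        μ.map (fun ω => Real.sqrt D * (wt D ω - W ω)) = gaussianReal 0 (uD D) :=
      fun D => hmap D (Real.sqrt D)
    have key : ∀ (u : ℝ≥0) (g : Ω → ℝ), Measurable g → μ.map g = gaussianReal 0 u →
        ∫ ω, f (g ω) ∂μ = ∫ x, f (Real.sqrt u * x) ∂(gaussianReal 0 1) := by
      intro u g hg hmapg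
      rw [← integral_map hg.aemeasurable f.continuous.aestronglyMeasurable, hmapg,
        ← GaussAux.gaussianReal_eq_map_sqrt u,
        integral_map (measurable_const_mul _).aemeasurable f.continuous.aestronglyMeasurable]
    have hmain : ∀ D : ℕ, ∫ ω, f (Real.sqrt D * (wt D ω - W ω)) ∂μ
        = ∫ x, f (Real.sqrt (uD D) * x) ∂(gaussianReal 0 1) :=
      fun D => key (uD D) _ ((hXDmeas D).const_mul _) (hγmapD D)
    have htarget : ∫ x, f x ∂(gaussianReal 0 q⁻¹)
        = ∫ x, f (Real.sqrt ((q : ℝ)⁻¹) * x) ∂(gaussianReal 0 1) := by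
      rw [← GaussAux.gaussianReal_eq_map_sqrt q⁻¹,
        integral_map (measurable_const_mul _).aemeasurable f.continuous.aestronglyMeasurable]
      simp [NNReal.coe_inv]
    have hbar : Tendsto (fun D : ℕ => (D : ℝ)⁻¹ * (1 + qD D)) atTop (nhds (q : ℝ)) := by
      have h0 : Tendsto (fun D : ℕ => (D : ℝ)⁻¹) atTop (nhds 0) :=
        tendsto_inv_atTop_nhds_zero_nat
      have h2 := h0.add hq'
      rw [zero_add] at h2
      refine h2.congr fun D => ?_
      ring
    have hu : Tendsto (fun D : ℕ => ((uD D) : ℝ)) atTop (nhds ((q : ℝ)⁻¹)) := by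
      have hinv := hbar.inv₀ (ne_of_gt hq0)
      refine hinv.congr' ?_
      filter_upwards [eventually_ge_atTop 1] with D hD1
      have hD0 : (0 : ℝ) < D := by exact_mod_cast Nat.lt_of_lt_of_le Nat.zero_lt_one hD1
      rw [huD D, mul_inv, inv_inv]
    have hsqrtu : Tendsto (fun D : ℕ => Real.sqrt (uD D)) atTop
        (nhds (Real.sqrt ((q : ℝ)⁻¹))) := (Real.continuous_sqrt.tendsto _).comp hu
    rw [htarget]
    refine Tendsto.congr (fun D => (hmain D).symm) ?_
    refine tendsto_integral_of_dominated_convergence (fun _ => ‖f‖)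
      (fun D => (f.continuous.comp (continuous_const.mul continuous_id)).aestronglyMeasurable)
      (integrable_const _) (fun D => Filter.Eventually.of_forall fun x => f.norm_coe_le_norm _)
      (Filter.Eventually.of_forall fun x => ?_)
    exact (f.continuous.tendsto _).comp (hsqrtu.mul_const x)
end

section
/- Let (g_D)_{D≥1} be a sequence of three-times continuously differentiable functions g_D : [0,1] → ℝ such that: (i) each g_D attains its global minimum at a unique interior point v*_D ∈ (η₀, 1−η₀) for some fixed η₀ > 0; (ii) g_D''(v*_D) ≥ c for a constant c > 0 independent of D; (iii) the first, second and third derivatives of g_D are bounded on [0,1] uniformly in D; and (iv) for every η > 0 there is δ(η) > 0 with g_D(v) − g_D(v*_D) ≥ δ(η) whenever |v − v*_D| ≥ η, uniformly in D. Then the Laplace-approximation ratio satisfies (∫₀¹ v e^{−D g_D(v)} dv) / (∫₀¹ e^{−D g_D(v)} dv) = v*_D + O(D⁻¹) as D → ∞. -/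
/-!
STATEMENT 10: Laplace approximation for posterior-mean-type ratios.  If `g_D : [0,1] → ℝ`
are C³ with a unique interior global minimizer `v*_D ∈ (η₀, 1−η₀)`, curvature at the
minimizer bounded below by `c > 0`, derivatives of orders 1–3 uniformly bounded, and
uniform separation `g_D(v) − g_D(v*_D) ≥ δ(η)` for `|v − v*_D| ≥ η`, then
`(∫₀¹ v e^{−D g_D(v)} dv) / (∫₀¹ e^{−D g_D(v)} dv) = v*_D + O(D⁻¹)`.
-/

open Filter Asymptotics intervalIntegral Set

lemma exp_diff_le' (a b : ℝ) (hab : a ≤ b) :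
    |Real.exp (-a) - Real.exp (-b)| ≤ |a - b| * Real.exp (-(min a b)) := by
  rw [min_eq_left hab]
  have h1 : Real.exp (-b) ≤ Real.exp (-a) := Real.exp_le_exp.2 (by linarith)
  rw [abs_of_nonneg (by linarith), abs_of_nonpos (by linarith)]
  have hb : Real.exp (-b) = Real.exp (-a) * Real.exp (-(b-a)) := by
    rw [← Real.exp_add]; ring_nf
  have h2 : 1 - Real.exp (-(b-a)) ≤ b - a := by
    have := Real.add_one_le_exp (-(b-a)); linarith
  have h3 := (Real.exp_pos (-a)).le
  calc Real.exp (-a) - Real.exp (-b) = Real.exp (-a) * (1 - Real.exp (-(b-a))) := by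
        rw [hb]; ring
    _ ≤ Real.exp (-a) * (b - a) := mul_le_mul_of_nonneg_left h2 h3
    _ = -(a-b) * Real.exp (-a) := by ring

lemma exp_diff_le (a b : ℝ) :
    |Real.exp (-a) - Real.exp (-b)| ≤ |a - b| * Real.exp (-(min a b)) := by
  rcases le_total a b with h | h
  · exact exp_diff_le' a b h
  · rw [abs_sub_comm, abs_sub_comm a b, min_comm]; exact exp_diff_le' b a h

lemma integral_exp_neg_le (k r : ℝ) (hk : 0 < k) (hr : 0 ≤ r) :
    ∫ t in (0:ℝ)..r, Real.exp (-(k*t)) ≤ 1/k := by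
  have hderiv : ∀ t ∈ uIcc (0:ℝ) r,
      HasDerivAt (fun t => -Real.exp (-(k*t))/k) (Real.exp (-(k*t))) t := by
    intro t _
    have h1 : HasDerivAt (fun t : ℝ => -(k*t)) (-k) t := by
      have := ((hasDerivAt_id t).const_mul k).neg
      simp only [id, mul_one] at this
      exact this
    have h2 := h1.exp
    have h3 := (h2.neg).div_const k
    have e : -(Real.exp (-(k * t)) * -k) / k = Real.exp (-(k * t)) := by
      rw [div_eq_iff hk.ne']; ring
    rw [e] at h3
    exact h3
  have hint : IntervalIntegrable (fun t => Real.exp (-(k*t))) MeasureTheory.volume 0 r :=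
    (Real.continuous_exp.comp (by continuity)).intervalIntegrable 0 r
  rw [integral_eq_sub_of_hasDerivAt hderiv hint]
  have h4 := (Real.exp_pos (-(k*r))).le
  have h5 : Real.exp (-(k*0)) = 1 := by norm_num
  rw [h5, show -Real.exp (-(k*r)) / k - -1/k = (1 - Real.exp (-(k*r)))/k by ring]
  gcongr
  nlinarith [Real.exp_pos (-(k*r))]

lemma sq_le_four_exp (x : ℝ) (hx : 0 ≤ x) : x^2 ≤ 4 * Real.exp x := by
  have h1 : 1 + x/2 ≤ Real.exp (x/2) := by
    have := Real.add_one_le_exp (x/2); linarith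
  have h2 : Real.exp x = Real.exp (x/2) * Real.exp (x/2) := by
    rw [← Real.exp_add]; ring_nf
  nlinarith [Real.exp_pos (x/2)]

lemma pow4_exp_le (l t : ℝ) (hl : 0 < l) :
    t^4 * Real.exp (-(l * t^2)) ≤ 16/l^2 * Real.exp (-(l/2 * t^2)) := by
  have key : t^4 * Real.exp (-(l/2 * t^2)) ≤ 16/l^2 := by
    have h := sq_le_four_exp (l/2 * t^2) (by positivity)
    have h2 : t^4 ≤ 16/l^2 * Real.exp (l/2 * t^2) := by
      rw [div_mul_eq_mul_div, le_div_iff₀ (by positivity)]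
      nlinarith
    calc t^4 * Real.exp (-(l/2 * t^2)) ≤
        (16/l^2 * Real.exp (l/2 * t^2)) * Real.exp (-(l/2 * t^2)) := by
          exact mul_le_mul_of_nonneg_right h2 (Real.exp_pos _).le
      _ = 16/l^2 := by rw [mul_assoc, ← Real.exp_add]; simp
  have : Real.exp (-(l * t^2)) = Real.exp (-(l/2 * t^2)) * Real.exp (-(l/2 * t^2)) := by
    rw [← Real.exp_add]; ring_nf
  calc t^4 * Real.exp (-(l * t^2))
      = (t^4 * Real.exp (-(l/2 * t^2))) * Real.exp (-(l/2 * t^2)) := by rw [this]; ring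
    _ ≤ 16/l^2 * Real.exp (-(l/2 * t^2)) :=
        mul_le_mul_of_nonneg_right key (Real.exp_pos _).le

lemma integral_exp_neg_sq_le (mu r : ℝ) (hmu : 0 < mu) (hr : 0 ≤ r) :
    ∫ t in (0:ℝ)..r, Real.exp (-(mu * t^2)) ≤ 2 / Real.sqrt mu := by
  have hs : 0 < Real.sqrt mu := Real.sqrt_pos.2 hmu
  have hpt : ∀ t ∈ Icc (0:ℝ) r, Real.exp (-(mu * t^2)) ≤
      Real.exp 1 * Real.exp (-(2 * Real.sqrt mu * t)) := by
    intro t _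
    rw [← Real.exp_add]
    apply Real.exp_le_exp.2
    have h : (Real.sqrt mu * t - 1)^2 ≥ 0 := sq_nonneg _
    have hsq : Real.sqrt mu ^ 2 = mu := Real.sq_sqrt hmu.le
    nlinarith
  have hint1 : IntervalIntegrable (fun t => Real.exp (-(mu * t^2))) MeasureTheory.volume 0 r :=
    (Real.continuous_exp.comp (by continuity)).intervalIntegrable 0 r
  have hint2 : IntervalIntegrable (fun t => Real.exp 1 * Real.exp (-(2 * Real.sqrt mu * t)))
      MeasureTheory.volume 0 r :=
    (continuous_const.mul (Real.continuous_exp.comp (by continuity))).intervalIntegrable 0 r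
  calc ∫ t in (0:ℝ)..r, Real.exp (-(mu * t^2))
      ≤ ∫ t in (0:ℝ)..r, Real.exp 1 * Real.exp (-(2 * Real.sqrt mu * t)) :=
        intervalIntegral.integral_mono_on hr hint1 hint2 hpt
    _ = Real.exp 1 * ∫ t in (0:ℝ)..r, Real.exp (-(2 * Real.sqrt mu * t)) :=
        intervalIntegral.integral_const_mul _ _
    _ ≤ Real.exp 1 * (1 / (2 * Real.sqrt mu)) := by
        apply mul_le_mul_of_nonneg_left
          (integral_exp_neg_le (2 * Real.sqrt mu) r (by positivity) hr) (Real.exp_pos 1).le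
    _ ≤ 2 / Real.sqrt mu := by
        have he : Real.exp 1 ≤ 4 := by
          have := Real.exp_one_lt_d9; linarith
        rw [mul_one_div, div_le_div_iff₀ (by positivity) hs]
        nlinarith

lemma abs_sub_le_of_uIcc {m v y : ℝ} (hy : y ∈ Set.uIcc m v) : |y - m| ≤ |v - m| := by
  rw [Set.mem_uIcc] at hy
  have h1 := le_abs_self (v - m)
  have h2 := neg_abs_le (v - m)
  rcases hy with ⟨ha, hb⟩ | ⟨ha, hb⟩ <;> rw [abs_le] <;> constructor <;> linarith

lemma taylor_key (f : ℝ → ℝ) (m C : ℝ) (hC : 0 ≤ C)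
    (hf : ContDiffOn ℝ 3 f (Set.Icc 0 1)) (hm : m ∈ Set.Ioo (0:ℝ) 1)
    (hmin : ∀ v ∈ Set.Icc (0:ℝ) 1, f m ≤ f v)
    (hC2 : ∀ v ∈ Set.Icc (0:ℝ) 1, |iteratedDerivWithin 2 f (Set.Icc 0 1) v| ≤ C)
    (hC3 : ∀ v ∈ Set.Icc (0:ℝ) 1, |iteratedDerivWithin 3 f (Set.Icc 0 1) v| ≤ C) :
    ∀ v ∈ Set.Icc (0:ℝ) 1,
      |f v - f m - iteratedDerivWithin 2 f (Set.Icc 0 1) m / 2 * (v - m)^2| ≤ C * |v - m|^3 := by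
  set s : Set ℝ := Set.Icc 0 1 with hs_def
  have hs : UniqueDiffOn ℝ s := uniqueDiffOn_Icc one_pos
  set f1 := derivWithin f s with hf1_def
  set f2 := derivWithin f1 s with hf2_def
  set f3 := derivWithin f2 s with hf3_def
  have hm_s : m ∈ s := ⟨hm.1.le, hm.2.le⟩
  -- identification of iterated derivatives
  have e2 : ∀ x ∈ s, iteratedDerivWithin 2 f s x = f2 x := by
    intro x hx
    rw [show (2:ℕ) = 1 + 1 from rfl, iteratedDerivWithin_succ',
      iteratedDerivWithin_one]
  have e3 : ∀ x ∈ s, iteratedDerivWithin 3 f s x = f3 x := by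
    intro x hx
    rw [show (3:ℕ) = 2 + 1 from rfl, iteratedDerivWithin_succ',
      show (2:ℕ) = 1 + 1 from rfl, iteratedDerivWithin_succ',
      iteratedDerivWithin_one]
  have hdf : DifferentiableOn ℝ f s := hf.differentiableOn (by norm_num)
  have hf1c : ContDiffOn ℝ 2 f1 s := hf.derivWithin hs (by norm_num)
  have hdf1 : DifferentiableOn ℝ f1 s := hf1c.differentiableOn (by norm_num)
  have hf2c : ContDiffOn ℝ 1 f2 s := hf1c.derivWithin hs (by norm_num)
  have hdf2 : DifferentiableOn ℝ f2 s := hf2c.differentiableOn (by norm_num)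
  have hnhds : s ∈ nhds m := Icc_mem_nhds hm.1 hm.2
  -- first derivative vanishes at the interior minimizer
  have f1m : f1 m = 0 := by
    have hloc : IsLocalMin f m := Filter.eventually_of_mem hnhds hmin
    rw [hf1_def, derivWithin_of_mem_nhds hnhds]
    exact hloc.deriv_eq_zero
  -- Step 1 : f2 is C-Lipschitz on s
  have step1 : ∀ v ∈ s, |f2 v - f2 m| ≤ C * |v - m| := by
    intro v hv
    have := Convex.norm_image_sub_le_of_norm_hasDerivWithin_le
      (f := f2) (f' := f3) (s := s) (C := C)
      (fun x hx => (hdf2 x hx).hasDerivWithinAt)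
      (fun x hx => by rw [Real.norm_eq_abs, ← e3 x hx]; exact hC3 x hx)
      (convex_Icc 0 1) hm_s hv
    simpa [Real.norm_eq_abs] using this
  -- Step 2 : first-order Taylor bound for f1
  have step2 : ∀ v ∈ s, |f1 v - f2 m * (v - m)| ≤ C * |v - m|^2 := by
    intro v hv
    set S := Set.uIcc m v with hS_def
    have hSs : S ⊆ s := Set.uIcc_subset_Icc hm_s hv
    have hq : ∀ y ∈ S, HasDerivWithinAt (fun w => f1 w - f2 m * (w - m)) (f2 y - f2 m) S y := by
      intro y hy
      have h1 : HasDerivWithinAt f1 (f2 y) S y :=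
        ((hdf1 y (hSs hy)).hasDerivWithinAt).mono hSs
      have h2 : HasDerivAt (fun w : ℝ => f2 m * (w - m)) (f2 m) y := by
        simpa using ((hasDerivAt_id y).sub_const m).const_mul (f2 m)
      exact h1.sub h2.hasDerivWithinAt
    have hbd : ∀ y ∈ S, ‖f2 y - f2 m‖ ≤ C * |v - m| := by
      intro y hy
      rw [Real.norm_eq_abs]
      calc |f2 y - f2 m| ≤ C * |y - m| := step1 y (hSs hy)
        _ ≤ C * |v - m| := mul_le_mul_of_nonneg_left (abs_sub_le_of_uIcc hy) hC
    have key := Convex.norm_image_sub_le_of_norm_hasDerivWithin_le hq hbd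
      (convex_uIcc m v) Set.left_mem_uIcc Set.right_mem_uIcc
    rw [Real.norm_eq_abs, Real.norm_eq_abs,
      show f1 m - f2 m * (m - m) = 0 by rw [f1m]; ring, sub_zero] at key
    calc |f1 v - f2 m * (v - m)| ≤ C * |v - m| * |v - m| := key
      _ = C * |v - m|^2 := by ring
  -- Step 3 : second-order Taylor bound for f
  have step3 : ∀ v ∈ s, |f v - f m - f2 m / 2 * (v - m)^2| ≤ C * |v - m|^3 := by
    intro v hv
    set S := Set.uIcc m v with hS_def
    have hSs : S ⊆ s := Set.uIcc_subset_Icc hm_s hv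
    have hq : ∀ y ∈ S, HasDerivWithinAt (fun w => f w - f2 m / 2 * (w - m)^2)
        (f1 y - f2 m * (y - m)) S y := by
      intro y hy
      have h1 : HasDerivWithinAt f (f1 y) S y :=
        ((hdf y (hSs hy)).hasDerivWithinAt).mono hSs
      have h2 : HasDerivAt (fun w : ℝ => f2 m / 2 * (w - m)^2) (f2 m * (y - m)) y := by
        have := (((hasDerivAt_id y).sub_const m).pow 2).const_mul (f2 m / 2)
        exact this.congr_deriv (by simp <;> ring)
      exact h1.sub h2.hasDerivWithinAt
    have hbd : ∀ y ∈ S, ‖f1 y - f2 m * (y - m)‖ ≤ C * |v - m|^2 := by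
      intro y hy
      rw [Real.norm_eq_abs]
      calc |f1 y - f2 m * (y - m)| ≤ C * |y - m|^2 := step2 y (hSs hy)
        _ ≤ C * |v - m|^2 := by
            have h := abs_sub_le_of_uIcc hy
            have h2 : |y - m|^2 ≤ |v - m|^2 := by nlinarith [abs_nonneg (y - m), abs_nonneg (v - m)]
            exact mul_le_mul_of_nonneg_left h2 hC
    have key := Convex.norm_image_sub_le_of_norm_hasDerivWithin_le hq hbd
      (convex_uIcc m v) Set.left_mem_uIcc Set.right_mem_uIcc
    rw [Real.norm_eq_abs, Real.norm_eq_abs] at key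
    have h0 : f m - f2 m / 2 * (m - m)^2 = f m := by ring
    rw [h0] at key
    calc |f v - f m - f2 m / 2 * (v - m)^2|
        = |f v - f2 m / 2 * (v - m)^2 - f m| := by rw [sub_right_comm]
      _ ≤ C * |v - m|^2 * |v - m| := key
      _ = C * |v - m|^3 := by ring
  intro v hv
  have := step3 v hv
  rwa [e2 m hm_s]

set_option maxHeartbeats 1000000 in
theorem laplace_ratio_approximation
    (g : ℕ → ℝ → ℝ) (vstar : ℕ → ℝ) (η₀ c : ℝ) (hη₀ : 0 < η₀) (hc : 0 < c)
    (hsmooth : ∀ D, ContDiffOn ℝ 3 (g D) (Set.Icc 0 1))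
    -- (i) unique interior global minimum
    (hmem : ∀ D, vstar D ∈ Set.Ioo η₀ (1 - η₀))
    (hmin : ∀ D, ∀ v ∈ Set.Icc (0:ℝ) 1, g D (vstar D) ≤ g D v)
    (huniq : ∀ D, ∀ v ∈ Set.Icc (0:ℝ) 1, g D v = g D (vstar D) → v = vstar D)
    -- (ii) curvature bounded below at the minimizer, uniformly in `D`
    (hcurv : ∀ D, c ≤ iteratedDerivWithin 2 (g D) (Set.Icc 0 1) (vstar D))
    -- (iii) derivatives of orders 1, 2, 3 uniformly bounded in `D`
    (hbound : ∃ C : ℝ, ∀ D, ∀ k ∈ ({1, 2, 3} : Set ℕ), ∀ v ∈ Set.Icc (0:ℝ) 1,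
      |iteratedDerivWithin k (g D) (Set.Icc 0 1) v| ≤ C)
    -- (iv) uniform separation away from the minimizer
    (hsep : ∀ η : ℝ, 0 < η → ∃ δ : ℝ, 0 < δ ∧ ∀ D, ∀ v ∈ Set.Icc (0:ℝ) 1,
      η ≤ |v - vstar D| → δ ≤ g D v - g D (vstar D)) :
    (fun D : ℕ =>
        (∫ v in (0:ℝ)..1, v * Real.exp (-(D : ℝ) * g D v)) /
          (∫ v in (0:ℝ)..1, Real.exp (-(D : ℝ) * g D v)) - vstar D)
      =O[atTop] (fun D : ℕ => (D : ℝ)⁻¹) := by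
  obtain ⟨C₀, hC₀⟩ := hbound
  obtain ⟨C, hC_def⟩ : ∃ x : ℝ, x = max C₀ (max c 1) := ⟨_, rfl⟩
  have hC1 : (1:ℝ) ≤ C := by rw [hC_def]; exact le_trans (le_max_right c 1) (le_max_right _ _)
  have hCpos : (0:ℝ) < C := lt_of_lt_of_le one_pos hC1
  have hcC : c ≤ C := by rw [hC_def]; exact le_trans (le_max_left c 1) (le_max_right _ _)
  have hC : ∀ D, ∀ k ∈ ({1, 2, 3} : Set ℕ), ∀ v ∈ Set.Icc (0:ℝ) 1,
      |iteratedDerivWithin k (g D) (Set.Icc 0 1) v| ≤ C :=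
    fun D k hk v hv => le_trans (hC₀ D k hk v hv) (by rw [hC_def]; exact le_max_left _ _)
  obtain ⟨r, hr_def⟩ : ∃ x : ℝ, x = min (c/(4*C)) η₀ := ⟨_, rfl⟩
  have hrpos : 0 < r := by rw [hr_def]; exact lt_min (by positivity) hη₀
  have hrη : r ≤ η₀ := by rw [hr_def]; exact min_le_right _ _
  have hrr1 : r ≤ c/(4*C) := by rw [hr_def]; exact min_le_left _ _
  have hCr : C * r ≤ c/4 := by
    have h := mul_le_mul_of_nonneg_left hrr1 hCpos.le
    have h2 : C * (c/(4*C)) = c/4 := by field_simp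
    linarith
  obtain ⟨δ, hδpos, hδ⟩ := hsep r hrpos
  -- memberships of the minimizers
  have hmIoo : ∀ D, vstar D ∈ Set.Ioo (0:ℝ) 1 := by
    intro D
    obtain ⟨h1, h2⟩ := hmem D
    exact ⟨lt_trans hη₀ h1, by linarith⟩
  have hmIcc : ∀ D, vstar D ∈ Set.Icc (0:ℝ) 1 := fun D => ⟨(hmIoo D).1.le, (hmIoo D).2.le⟩
  -- Taylor expansion bounds
  have hT : ∀ D, ∀ v ∈ Set.Icc (0:ℝ) 1,
      |g D v - g D (vstar D) -
        iteratedDerivWithin 2 (g D) (Set.Icc 0 1) (vstar D) / 2 * (v - vstar D)^2|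
      ≤ C * |v - vstar D|^3 := fun D =>
    taylor_key (g D) (vstar D) C hCpos.le (hsmooth D) (hmIoo D) (hmin D)
      (fun v hv => hC D 2 (by simp) v hv) (fun v hv => hC D 3 (by simp) v hv)
  have hq2lo : ∀ D, c ≤ iteratedDerivWithin 2 (g D) (Set.Icc 0 1) (vstar D) := hcurv
  have hq2hi : ∀ D, iteratedDerivWithin 2 (g D) (Set.Icc 0 1) (vstar D) ≤ C := fun D =>
    le_trans (le_abs_self _) (hC D 2 (by simp) _ (hmIcc D))
  have habs1 : ∀ D, ∀ v ∈ Set.Icc (0:ℝ) 1, |v - vstar D| ≤ 1 := by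
    intro D v hv
    obtain ⟨h1, h2⟩ := hv
    obtain ⟨h3, h4⟩ := hmIcc D
    rw [abs_le]; constructor <;> linarith
  have cube : ∀ x : ℝ, |x|^3 = x^2 * |x| := by
    intro x; rw [pow_succ, sq_abs]
  -- uniform upper quadratic bound
  have hU : ∀ D, ∀ v ∈ Set.Icc (0:ℝ) 1,
      g D v - g D (vstar D) ≤ 2*C*(v - vstar D)^2 := by
    intro D v hv
    have h1 := (abs_le.mp (hT D v hv)).2
    have h2 := habs1 D v hv
    have h3 := cube (v - vstar D)
    have h4 := hq2hi D
    have h5 := sq_nonneg (v - vstar D)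
    have h6 := abs_nonneg (v - vstar D)
    have h7 : (v - vstar D)^2 = |v - vstar D|^2 := (sq_abs _).symm
    nlinarith [mul_nonneg (sub_nonneg.2 h4) h5,
      mul_nonneg (mul_nonneg hCpos.le h5) (sub_nonneg.2 h2)]
  -- uniform lower quadratic bound near the minimizer
  have hLo : ∀ D, ∀ v ∈ Set.Icc (0:ℝ) 1, |v - vstar D| ≤ r →
      c/4*(v - vstar D)^2 ≤ g D v - g D (vstar D) := by
    intro D v hv hvr
    have h1 := (abs_le.mp (hT D v hv)).1
    have h3 := cube (v - vstar D)
    have h4 := hq2lo D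
    have h5 := sq_nonneg (v - vstar D)
    have h6 := abs_nonneg (v - vstar D)
    have h7 : (v - vstar D)^2 = |v - vstar D|^2 := (sq_abs _).symm
    have h8 : C * |v - vstar D| ≤ C * r := mul_le_mul_of_nonneg_left hvr hCpos.le
    nlinarith [mul_nonneg (sub_nonneg.2 h4) h5, mul_nonneg (sub_nonneg.2 h8) h5,
      mul_nonneg (sub_nonneg.2 hCr) h5]
  -- constants for the final bound
  obtain ⟨c₁, hc1_def⟩ : ∃ x : ℝ, x = 2 * Real.exp (-(2*C)) := ⟨_, rfl⟩
  have hc₁pos : 0 < c₁ := by rw [hc1_def]; positivity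
  obtain ⟨K₁, hK1_def⟩ : ∃ x : ℝ, x = 1024 * C / (c^2 * Real.sqrt (c/8)) := ⟨_, rfl⟩
  have hK₁pos : 0 < K₁ := by
    rw [hK1_def]
    have hsq : 0 < Real.sqrt (c/8) := Real.sqrt_pos.2 (by positivity)
    positivity
  rw [Asymptotics.isBigO_iff]
  refine ⟨(K₁ + 2)/c₁, ?_⟩
  have htends : Tendsto (fun n : ℕ => (n:ℝ)) atTop atTop := tendsto_natCast_atTop_atTop
  have hev1 : ∀ᶠ D : ℕ in atTop, (1:ℝ) ≤ (D:ℝ) := htends.eventually_ge_atTop 1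
  have hev2 : ∀ᶠ D : ℕ in atTop, r⁻¹^2 ≤ (D:ℝ) := htends.eventually_ge_atTop _
  have hev3 : ∀ᶠ D : ℕ in atTop, (D:ℝ)^2 * Real.exp (-(δ*(D:ℝ))) ≤ 1 := by
    have h0 := Real.tendsto_pow_mul_exp_neg_atTop_nhds_zero 2
    have hδt : Tendsto (fun x:ℝ => δ * x) atTop atTop :=
      Filter.Tendsto.const_mul_atTop hδpos tendsto_id
    have h1 := h0.comp hδt
    have h2 := h1.const_mul ((δ^2)⁻¹)
    rw [mul_zero] at h2
    have h3 : Tendsto (fun x:ℝ => x^2 * Real.exp (-(δ*x))) atTop (nhds 0) := by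
      refine h2.congr fun x => ?_
      simp only [Function.comp]
      field_simp
    have h4 : ∀ᶠ x : ℝ in atTop, x^2 * Real.exp (-(δ*x)) ≤ 1 :=
      h3.eventually (ge_mem_nhds one_pos)
    exact htends.eventually h4
  filter_upwards [hev1, hev2, hev3] with D hD1 hD2 hD3
  obtain ⟨d, hd_def⟩ : ∃ x : ℝ, x = (D:ℝ) := ⟨_, rfl⟩
  rw [← hd_def]
  rw [← hd_def] at hD1 hD2 hD3
  have hd0 : (0:ℝ) < d := lt_of_lt_of_le one_pos hD1
  obtain ⟨m, hm_def⟩ : ∃ x : ℝ, x = vstar D := ⟨_, rfl⟩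
  rw [← hm_def]
  have hm01 : m ∈ Set.Icc (0:ℝ) 1 := by rw [hm_def]; exact hmIcc D
  have hmlo : η₀ < m := by rw [hm_def]; exact (hmem D).1
  have hmhi : m < 1 - η₀ := by rw [hm_def]; exact (hmem D).2
  have hmr0 : (0:ℝ) ≤ m - r := by linarith
  have hmr1 : m + r ≤ 1 := by linarith
  have h01 : (0:ℝ) ∈ Set.Icc (0:ℝ) 1 := by norm_num
  have h11 : (1:ℝ) ∈ Set.Icc (0:ℝ) 1 := by norm_num
  have hmrIcc : m - r ∈ Set.Icc (0:ℝ) 1 := ⟨hmr0, by linarith [hrpos]⟩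
  have hmpIcc : m + r ∈ Set.Icc (0:ℝ) 1 := ⟨by linarith [hrpos], hmr1⟩
  obtain ⟨sd, hsd_def⟩ : ∃ x : ℝ, x = Real.sqrt d := ⟨_, rfl⟩
  have hsdpos : 0 < sd := by rw [hsd_def]; exact Real.sqrt_pos.2 hd0
  have hsdsq : sd^2 = d := by rw [hsd_def]; exact Real.sq_sqrt hd0.le
  have hsd1 : 1 ≤ sd := by
    rw [hsd_def]
    calc (1:ℝ) = Real.sqrt 1 := Real.sqrt_one.symm
      _ ≤ Real.sqrt d := Real.sqrt_le_sqrt hD1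
  have hsdd : sd ≤ d := by
    have h := mul_le_mul_of_nonneg_left hsd1 hsdpos.le
    have hsq2 : sd * sd = d := by rw [← pow_two]; exact hsdsq
    linarith [h, hsq2]
  have hrs' : sd⁻¹ ≤ r := by
    have h1 : r⁻¹ ≤ sd := by
      have h2 := Real.sqrt_le_sqrt hD2
      rw [hsd_def]
      rwa [Real.sqrt_sq (by positivity : (0:ℝ) ≤ r⁻¹)] at h2
    calc sd⁻¹ ≤ (r⁻¹)⁻¹ := inv_anti₀ (by positivity) h1
      _ = r := inv_inv r
  obtain ⟨s0, hs0_def⟩ : ∃ x : ℝ, x = sd⁻¹ := ⟨_, rfl⟩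
  have hs0pos : 0 < s0 := by rw [hs0_def]; positivity
  have hs0sq : d * s0^2 = 1 := by
    rw [hs0_def]
    field_simp
    exact hsdsq.symm
  -- the shifted weight function
  have hrs : s0 ≤ r := by rw [hs0_def]; exact hrs'
  obtain ⟨w, hw_def⟩ : ∃ x : ℝ → ℝ, x = fun v => Real.exp (-(d * (g D v - g D m))) := ⟨_, rfl⟩
  have hwpos : ∀ v, 0 < w v := fun v => by rw [hw_def]; exact Real.exp_pos _
  have hgc : ContinuousOn (g D) (Set.Icc 0 1) := (hsmooth D).continuousOn
  have hwc : ContinuousOn w (Set.Icc 0 1) := by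
    rw [hw_def]
    apply Real.continuous_exp.comp_continuousOn
    exact (continuousOn_const.mul (hgc.sub continuousOn_const)).neg
  have hwc1 : ContinuousOn (fun v => (v - m) * w v) (Set.Icc 0 1) :=
    (continuousOn_id.sub continuousOn_const).mul hwc
  have hwc2 : ContinuousOn (fun v => v * w v) (Set.Icc 0 1) := continuousOn_id.mul hwc
  have hintw : ∀ a b : ℝ, a ∈ Set.Icc (0:ℝ) 1 → b ∈ Set.Icc (0:ℝ) 1 →
      IntervalIntegrable w MeasureTheory.volume a b := fun a b ha hb =>
    (hwc.mono (Set.uIcc_subset_Icc ha hb)).intervalIntegrable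
  have hintF : ∀ a b : ℝ, a ∈ Set.Icc (0:ℝ) 1 → b ∈ Set.Icc (0:ℝ) 1 →
      IntervalIntegrable (fun v => (v - m) * w v) MeasureTheory.volume a b := fun a b ha hb =>
    (hwc1.mono (Set.uIcc_subset_Icc ha hb)).intervalIntegrable
  -- lower bound for the denominator
  have hms0a : m - s0 ∈ Set.Icc (0:ℝ) 1 := ⟨by linarith, by linarith⟩
  have hms0b : m + s0 ∈ Set.Icc (0:ℝ) 1 := ⟨by linarith, by linarith⟩
  have hI0low : c₁ / sd ≤ ∫ v in (0:ℝ)..1, w v := by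
    have e1 := intervalIntegral.integral_add_adjacent_intervals
      (hintw 0 (m - s0) h01 hms0a) (hintw (m - s0) (m + s0) hms0a hms0b)
    have e2 := intervalIntegral.integral_add_adjacent_intervals
      (hintw 0 (m + s0) h01 hms0b) (hintw (m + s0) 1 hms0b h11)
    have n1 : 0 ≤ ∫ v in (0:ℝ)..(m - s0), w v :=
      intervalIntegral.integral_nonneg hms0a.1 (fun u _ => (hwpos u).le)
    have n3 : 0 ≤ ∫ v in (m + s0)..1, w v :=
      intervalIntegral.integral_nonneg hms0b.2 (fun u _ => (hwpos u).le)
    have hpt : ∀ v ∈ Set.Icc (m - s0) (m + s0), Real.exp (-(2*C)) ≤ w v := by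
      intro v hv
      obtain ⟨hv1, hv2⟩ := hv
      have hv01 : v ∈ Set.Icc (0:ℝ) 1 := ⟨by linarith, by linarith⟩
      have hUv := hU D v hv01
      rw [← hm_def] at hUv
      have hsq : (v - m)^2 ≤ s0^2 := sq_le_sq' (by linarith) (by linarith)
      simp only [hw_def]
      apply Real.exp_le_exp.2
      have h6 : d * (g D v - g D m) ≤ d * (2*C*(v - m)^2) :=
        mul_le_mul_of_nonneg_left hUv hd0.le
      have h7 : d * (2*C*(v-m)^2) ≤ 2*C * (d * s0^2) := by
        have hh := mul_le_mul_of_nonneg_left hsq (by positivity : (0:ℝ) ≤ 2*C*d)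
        linarith [hh]
      rw [hs0sq] at h7
      linarith
    have hmidlow : (2*s0) * Real.exp (-(2*C)) ≤ ∫ v in (m - s0)..(m + s0), w v := by
      have hconst : ∫ v in (m - s0)..(m + s0), (fun _ => Real.exp (-(2*C))) v
          = (2*s0) * Real.exp (-(2*C)) := by
        rw [intervalIntegral.integral_const, smul_eq_mul]
        ring_nf
      calc (2*s0) * Real.exp (-(2*C)) = _ := hconst.symm
        _ ≤ ∫ v in (m - s0)..(m + s0), w v :=
          intervalIntegral.integral_mono_on (by linarith)
            (intervalIntegrable_const) (hintw _ _ hms0a hms0b) hpt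
    have heq : c₁ / sd = (2*s0) * Real.exp (-(2*C)) := by
      rw [hc1_def, hs0_def]
      field_simp
    rw [heq]
    linarith
  have hI0pos : 0 < ∫ v in (0:ℝ)..1, w v := lt_of_lt_of_le (by positivity) hI0low
  -- tail bounds for the numerator
  have htail : ∀ a b : ℝ, a ∈ Set.Icc (0:ℝ) 1 → b ∈ Set.Icc (0:ℝ) 1 → a ≤ b →
      (∀ x ∈ Set.Ioc a b, r ≤ |x - m|) →
      |∫ v in a..b, (v - m) * w v| ≤ Real.exp (-(d*δ)) := by
    intro a b ha hb hab hxr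
    have hb1 : ∀ x ∈ Set.uIoc a b, ‖(x - m) * w x‖ ≤ Real.exp (-(d*δ)) := by
      intro x hx
      rw [Set.uIoc_of_le hab] at hx
      have hx01 : x ∈ Set.Icc (0:ℝ) 1 := ⟨le_trans ha.1 hx.1.le, le_trans hx.2 hb.2⟩
      have hδx : δ ≤ g D x - g D m := by
        have := hδ D x hx01 (by rw [← hm_def]; exact hxr x hx)
        rwa [← hm_def] at this
      have hwx : w x ≤ Real.exp (-(d*δ)) := by
        simp only [hw_def]
        apply Real.exp_le_exp.2
        have h6 : d * δ ≤ d * (g D x - g D m) := mul_le_mul_of_nonneg_left hδx hd0.le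
        linarith
      have habsx : |x - m| ≤ 1 := by
        have := habs1 D x hx01
        rwa [← hm_def] at this
      rw [Real.norm_eq_abs, abs_mul, abs_of_pos (hwpos x)]
      calc |x - m| * w x ≤ 1 * Real.exp (-(d*δ)) :=
            mul_le_mul habsx hwx (hwpos x).le zero_le_one
        _ = _ := one_mul _
    have hkey := intervalIntegral.norm_integral_le_of_norm_le_const hb1
    rw [Real.norm_eq_abs] at hkey
    calc |∫ v in a..b, (v - m) * w v| ≤ Real.exp (-(d*δ)) * |b - a| := hkey
      _ ≤ Real.exp (-(d*δ)) * 1 := by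
          apply mul_le_mul_of_nonneg_left _ (Real.exp_pos _).le
          rw [abs_of_nonneg (by linarith)]
          have := ha.1; have := hb.2; linarith
      _ = _ := mul_one _
  -- the middle (symmetrized) estimate
  obtain ⟨lam, hlam_def⟩ : ∃ x : ℝ, x = c/4*d := ⟨_, rfl⟩
  have hlampos : 0 < lam := by rw [hlam_def]; positivity
  obtain ⟨φ, hφ_def⟩ : ∃ x : ℝ → ℝ, x = fun t => t * w (t + m) := ⟨_, rfl⟩
  have hφc : ContinuousOn φ (Set.Icc (-r) r) := by
    rw [hφ_def]
    apply ContinuousOn.mul continuousOn_id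
    apply hwc.comp (Continuous.continuousOn (continuous_id.add continuous_const))
    intro t ht
    simp only [Set.mem_Icc, id_eq, Pi.add_apply] at ht ⊢
    constructor <;> linarith [ht.1, ht.2]
  have hintφ : ∀ a b : ℝ, a ∈ Set.Icc (-r) r → b ∈ Set.Icc (-r) r →
      IntervalIntegrable φ MeasureTheory.volume a b := fun a b ha hb =>
    (hφc.mono (Set.uIcc_subset_Icc ha hb)).intervalIntegrable
  have hφnegc : ContinuousOn (fun t => φ (-t)) (Set.Icc (-r) r) := by
    apply hφc.comp continuous_neg.continuousOn
    intro t ht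
    simp only [Set.mem_Icc] at ht ⊢
    constructor <;> linarith [ht.1, ht.2]
  have hIa : IntervalIntegrable (fun t => φ (-t)) MeasureTheory.volume 0 r :=
    (hφnegc.mono (Set.uIcc_subset_Icc ⟨by linarith, by linarith⟩
      ⟨by linarith, le_refl r⟩)).intervalIntegrable
  have hIb : IntervalIntegrable φ MeasureTheory.volume 0 r :=
    hintφ 0 r ⟨by linarith, by linarith⟩ ⟨by linarith, le_refl r⟩
  have hJ1 : ∫ v in (m-r)..(m+r), (v - m) * w v = ∫ t in (-r)..r, φ t := by
    have hcv := intervalIntegral.integral_comp_add_right (a := -r) (b := r)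
      (f := fun v => (v - m) * w v) m
    rw [show -r + m = m - r by ring, show r + m = m + r by ring] at hcv
    rw [← hcv]
    apply intervalIntegral.integral_congr
    intro t _
    simp only [hφ_def, add_sub_cancel_right]
  have hsplitφ : ∫ t in (-r)..r, φ t
      = (∫ t in (0:ℝ)..r, φ (-t)) + ∫ t in (0:ℝ)..r, φ t := by
    have e1 := intervalIntegral.integral_add_adjacent_intervals
      (hintφ (-r) 0 ⟨le_refl _, by linarith⟩ ⟨by linarith, by linarith⟩) hIb
    have e2 := intervalIntegral.integral_comp_neg (a := (0:ℝ)) (b := r) (f := φ)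
    rw [neg_zero] at e2
    linarith
  have hsum : (∫ t in (0:ℝ)..r, φ (-t)) + ∫ t in (0:ℝ)..r, φ t
      = ∫ t in (0:ℝ)..r, (φ (-t) + φ t) := (intervalIntegral.integral_add hIa hIb).symm
  have hptmid : ∀ t ∈ Set.Icc (0:ℝ) r, |φ (-t) + φ t| ≤
      2*C*d * (16/lam^2 * Real.exp (-(lam/2 * t^2))) := by
    intro t ht
    obtain ⟨ht0, htr⟩ := ht
    have hmem1 : t + m ∈ Set.Icc (0:ℝ) 1 := ⟨by linarith, by linarith⟩
    have hmem2 : -t + m ∈ Set.Icc (0:ℝ) 1 := ⟨by linarith, by linarith⟩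
    have hTp := hT D (t + m) hmem1
    rw [← hm_def, show t + m - m = t by ring, abs_of_nonneg ht0] at hTp
    have hTm := hT D (-t + m) hmem2
    rw [← hm_def, show -t + m - m = -t by ring, neg_sq, abs_neg, abs_of_nonneg ht0] at hTm
    have hdiff : |(g D (t+m) - g D m) - (g D (-t+m) - g D m)| ≤ 2*C*t^3 := by
      have a1 := abs_le.mp hTp
      have a2 := abs_le.mp hTm
      rw [abs_le]
      constructor <;> [linarith [a1.1, a2.2]; linarith [a1.2, a2.1]]
    have hlop : c/4*t^2 ≤ g D (t+m) - g D m := by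
      have := hLo D (t+m) hmem1
        (by rw [← hm_def, show t + m - m = t by ring, abs_of_nonneg ht0]; exact htr)
      rw [← hm_def, show t + m - m = t by ring] at this
      exact this
    have hlom : c/4*t^2 ≤ g D (-t+m) - g D m := by
      have := hLo D (-t+m) hmem2
        (by rw [← hm_def, show -t + m - m = -t by ring, abs_neg, abs_of_nonneg ht0]; exact htr)
      rw [← hm_def, show -t + m - m = -t by ring, neg_sq] at this
      exact this
    -- rewrite the sum
    have hφsum : φ (-t) + φ t = t * (w (t+m) - w (-t+m)) := by
      simp only [hφ_def]
      ring
    rw [hφsum, abs_mul, abs_of_nonneg ht0]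
    obtain ⟨a, ha_def⟩ : ∃ x : ℝ, x = d * (g D (t+m) - g D m) := ⟨_, rfl⟩
    obtain ⟨b, hb_def⟩ : ∃ x : ℝ, x = d * (g D (-t+m) - g D m) := ⟨_, rfl⟩
    have hwab : w (t+m) - w (-t+m) = Real.exp (-a) - Real.exp (-b) := by
      rw [hw_def, ha_def, hb_def]
    rw [hwab]
    have hed := exp_diff_le a b
    have hab2 : |a - b| ≤ d * (2*C*t^3) := by
      rw [ha_def, hb_def, ← mul_sub, abs_mul, abs_of_pos hd0]
      exact mul_le_mul_of_nonneg_left hdiff hd0.le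
    have hminab : lam * t^2 ≤ min a b := by
      apply le_min
      · rw [ha_def, hlam_def]
        calc c/4*d * t^2 = d * (c/4*t^2) := by ring
          _ ≤ d * (g D (t+m) - g D m) := mul_le_mul_of_nonneg_left hlop hd0.le
      · rw [hb_def, hlam_def]
        calc c/4*d * t^2 = d * (c/4*t^2) := by ring
          _ ≤ d * (g D (-t+m) - g D m) := mul_le_mul_of_nonneg_left hlom hd0.le
    have hexpmin : Real.exp (-(min a b)) ≤ Real.exp (-(lam * t^2)) := by
      apply Real.exp_le_exp.2
      linarith
    have hchain : |Real.exp (-a) - Real.exp (-b)| ≤ d * (2*C*t^3) * Real.exp (-(lam * t^2)) := by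
      calc |Real.exp (-a) - Real.exp (-b)| ≤ |a - b| * Real.exp (-(min a b)) := hed
        _ ≤ (d * (2*C*t^3)) * Real.exp (-(lam * t^2)) := by
            apply mul_le_mul hab2 hexpmin (Real.exp_pos _).le
            positivity
    calc t * |Real.exp (-a) - Real.exp (-b)|
        ≤ t * (d * (2*C*t^3) * Real.exp (-(lam * t^2))) :=
          mul_le_mul_of_nonneg_left hchain ht0
      _ = 2*C*d * (t^4 * Real.exp (-(lam * t^2))) := by ring
      _ ≤ 2*C*d * (16/lam^2 * Real.exp (-(lam/2 * t^2))) := by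
          apply mul_le_mul_of_nonneg_left (pow4_exp_le lam t hlampos) (by positivity)
  have hintmid1 : IntervalIntegrable (fun t => φ (-t) + φ t) MeasureTheory.volume 0 r :=
    hIa.add hIb
  have hmidabs : |∫ t in (0:ℝ)..r, (φ (-t) + φ t)| ≤ ∫ t in (0:ℝ)..r, |φ (-t) + φ t| :=
    intervalIntegral.abs_integral_le_integral_abs hrpos.le
  have hmono : ∫ t in (0:ℝ)..r, |φ (-t) + φ t| ≤
      ∫ t in (0:ℝ)..r, 2*C*d * (16/lam^2 * Real.exp (-(lam/2 * t^2))) :=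
    intervalIntegral.integral_mono_on hrpos.le hintmid1.abs
      ((Continuous.intervalIntegrable (by fun_prop) 0 r)) hptmid
  have hconstmid : ∫ t in (0:ℝ)..r, 2*C*d * (16/lam^2 * Real.exp (-(lam/2 * t^2)))
      ≤ 2*C*d*(16/lam^2) * (2/Real.sqrt (lam/2)) := by
    have heq1 : ∫ t in (0:ℝ)..r, 2*C*d * (16/lam^2 * Real.exp (-(lam/2 * t^2)))
        = 2*C*d*(16/lam^2) * ∫ t in (0:ℝ)..r, Real.exp (-(lam/2 * t^2)) := by
      rw [← intervalIntegral.integral_const_mul]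
      apply intervalIntegral.integral_congr
      intro t _
      ring
    rw [heq1]
    apply mul_le_mul_of_nonneg_left
      (integral_exp_neg_sq_le (lam/2) r (by positivity) hrpos.le) (by positivity)
  have hfinmid : 2*C*d*(16/lam^2) * (2/Real.sqrt (lam/2)) = K₁/(d*sd) := by
    have h8 : lam/2 = c/8*d := by rw [hlam_def]; ring
    have h9 : Real.sqrt (c/8*d) = Real.sqrt (c/8) * sd := by
      rw [Real.sqrt_mul (by positivity : (0:ℝ) ≤ c/8) d, hsd_def]
    have hsqpos : 0 < Real.sqrt (c/8) := Real.sqrt_pos.2 (by positivity)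
    rw [h8, h9, hK1_def, hlam_def]
    field_simp
    ring
  have hmidfinal : |∫ v in (m-r)..(m+r), (v - m) * w v| ≤ K₁/(d*sd) := by
    rw [hJ1, hsplitφ, hsum]
    calc |∫ t in (0:ℝ)..r, (φ (-t) + φ t)| ≤ ∫ t in (0:ℝ)..r, |φ (-t) + φ t| := hmidabs
      _ ≤ ∫ t in (0:ℝ)..r, 2*C*d * (16/lam^2 * Real.exp (-(lam/2 * t^2))) := hmono
      _ ≤ 2*C*d*(16/lam^2) * (2/Real.sqrt (lam/2)) := hconstmid
      _ = K₁/(d*sd) := hfinmid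
  -- assemble the numerator bound
  have htailL : |∫ v in (0:ℝ)..(m-r), (v - m) * w v| ≤ Real.exp (-(d*δ)) := by
    apply htail 0 (m-r) h01 hmrIcc hmr0
    intro x hx
    rw [abs_of_nonpos (by linarith [hx.2])]
    linarith [hx.2]
  have htailR : |∫ v in (m+r)..1, (v - m) * w v| ≤ Real.exp (-(d*δ)) := by
    apply htail (m+r) 1 hmpIcc h11 hmr1
    intro x hx
    rw [abs_of_nonneg (by linarith [hx.1.le])]
    linarith [hx.1.le]
  have hNsplit : ∫ v in (0:ℝ)..1, (v - m) * w v =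
      (∫ v in (0:ℝ)..(m-r), (v - m) * w v) + (∫ v in (m-r)..(m+r), (v - m) * w v)
        + ∫ v in (m+r)..1, (v - m) * w v := by
    have e1 := intervalIntegral.integral_add_adjacent_intervals
      (hintF 0 (m-r) h01 hmrIcc) (hintF (m-r) (m+r) hmrIcc hmpIcc)
    have e2 := intervalIntegral.integral_add_adjacent_intervals
      (hintF 0 (m+r) h01 hmpIcc) (hintF (m+r) 1 hmpIcc h11)
    linarith
  have hN : |∫ v in (0:ℝ)..1, (v - m) * w v| ≤ K₁/(d*sd) + 2*Real.exp (-(d*δ)) := by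
    rw [hNsplit]
    calc |(∫ v in (0:ℝ)..(m-r), (v - m) * w v) + (∫ v in (m-r)..(m+r), (v - m) * w v)
          + ∫ v in (m+r)..1, (v - m) * w v|
        ≤ |(∫ v in (0:ℝ)..(m-r), (v - m) * w v) + (∫ v in (m-r)..(m+r), (v - m) * w v)|
          + |∫ v in (m+r)..1, (v - m) * w v| := abs_add_le _ _
      _ ≤ |∫ v in (0:ℝ)..(m-r), (v - m) * w v| + |∫ v in (m-r)..(m+r), (v - m) * w v|
          + |∫ v in (m+r)..1, (v - m) * w v| := by
            have := abs_add_le (∫ v in (0:ℝ)..(m-r), (v - m) * w v)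
              (∫ v in (m-r)..(m+r), (v - m) * w v)
            linarith
      _ ≤ K₁/(d*sd) + 2*Real.exp (-(d*δ)) := by linarith
  -- rewrite the ratio
  have hEpt : ∀ v, Real.exp (-d * g D v) = Real.exp (-(d * g D m)) * w v := by
    intro v
    simp only [hw_def]
    rw [← Real.exp_add]
    congr 1
    ring
  have hG : Real.exp (-(d * g D m)) ≠ 0 := (Real.exp_pos _).ne'
  have hnum_eq : ∫ v in (0:ℝ)..1, v * Real.exp (-d * g D v)
      = Real.exp (-(d * g D m)) * ∫ v in (0:ℝ)..1, v * w v := by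
    rw [← intervalIntegral.integral_const_mul]
    apply intervalIntegral.integral_congr
    intro v _
    simp only [hEpt]
    ring
  have hden_eq : ∫ v in (0:ℝ)..1, Real.exp (-d * g D v)
      = Real.exp (-(d * g D m)) * ∫ v in (0:ℝ)..1, w v := by
    rw [← intervalIntegral.integral_const_mul]
    apply intervalIntegral.integral_congr
    intro v _
    simp only [hEpt]
  rw [hnum_eq, hden_eq, mul_div_mul_left _ _ hG]
  have hintVW : IntervalIntegrable (fun v => v * w v) MeasureTheory.volume 0 1 :=
    (hwc2.mono (Set.uIcc_subset_Icc h01 h11)).intervalIntegrable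
  have hintMW : IntervalIntegrable (fun v => m * w v) MeasureTheory.volume 0 1 :=
    (continuousOn_const.mul (hwc.mono (Set.uIcc_subset_Icc h01 h11))).intervalIntegrable
  have hI1mI0 : (∫ v in (0:ℝ)..1, v * w v) - m * (∫ v in (0:ℝ)..1, w v)
      = ∫ v in (0:ℝ)..1, (v - m) * w v := by
    rw [← intervalIntegral.integral_const_mul,
      ← intervalIntegral.integral_sub hintVW hintMW]
    apply intervalIntegral.integral_congr
    intro v _
    ring
  have hratio : (∫ v in (0:ℝ)..1, v * w v) / (∫ v in (0:ℝ)..1, w v) - m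
      = (∫ v in (0:ℝ)..1, (v - m) * w v) / (∫ v in (0:ℝ)..1, w v) := by
    rw [← hI1mI0]
    field_simp
  rw [hratio, Real.norm_eq_abs, Real.norm_eq_abs, abs_div, abs_of_pos hI0pos]
  have hstep : |∫ v in (0:ℝ)..1, (v - m) * w v| / (∫ v in (0:ℝ)..1, w v)
      ≤ (K₁/(d*sd) + 2*Real.exp (-(d*δ))) / (c₁/sd) :=
    div_le_div₀ (by positivity) hN (by positivity) hI0low
  have harith : (K₁/(d*sd) + 2*Real.exp (-(d*δ))) / (c₁/sd) ≤ (K₁+2)/c₁ * |d⁻¹| := by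
    rw [abs_of_pos (by positivity : (0:ℝ) < d⁻¹)]
    have hA : (K₁/(d*sd) + 2*Real.exp (-(d*δ))) / (c₁/sd)
        = (K₁/d + 2*sd*Real.exp (-(d*δ))) / c₁ := by
      field_simp
    rw [hA]
    have h1 : 2*sd*Real.exp (-(d*δ)) ≤ 2/d := by
      have hexp : Real.exp (-(d*δ)) = Real.exp (-(δ*d)) := by rw [mul_comm]
      rw [hexp]
      have h2 : d^2 * Real.exp (-(δ*d)) ≤ 1 := hD3
      have h3 : d * Real.exp (-(δ*d)) ≤ 1/d := by
        rw [le_div_iff₀ hd0]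
        calc d * Real.exp (-(δ*d)) * d = d^2 * Real.exp (-(δ*d)) := by ring
          _ ≤ 1 := h2
      have h4 : sd * Real.exp (-(δ*d)) ≤ d * Real.exp (-(δ*d)) :=
        mul_le_mul_of_nonneg_right hsdd (Real.exp_pos _).le
      calc 2*sd*Real.exp (-(δ*d)) = 2*(sd * Real.exp (-(δ*d))) := by ring
        _ ≤ 2*(d * Real.exp (-(δ*d))) := by linarith
        _ ≤ 2*(1/d) := by linarith
        _ = 2/d := by ring
    have h5 : K₁/d + 2*sd*Real.exp (-(d*δ)) ≤ (K₁+2)/d := by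
      rw [add_div]
      have : (2:ℝ)/d = 2/d := rfl
      linarith
    calc (K₁/d + 2*sd*Real.exp (-(d*δ))) / c₁ ≤ ((K₁+2)/d) / c₁ := by gcongr
      _ = (K₁+2)/c₁ * d⁻¹ := by
          rw [div_div, mul_comm d c₁, ← div_div, div_eq_mul_inv]
  exact le_trans hstep harith
end

section
/- In the Gaussian p-factor model, let A_D and Â_D be D×p loading matrices with rows a_jᵀ and â_jᵀ, with ‖a_j‖ < 1, ‖â_j‖ < 1 for all j, and let Ψ_D², Ψ̂_D² be the corresponding diagonal matrices with entries ψ_j² = 1−‖a_j‖², ψ̂_j² = 1−‖â_j‖² uniformly bounded away from 0. Let z_D ∈ ℝ^D be a realization with sup_D D⁻¹ Σ_{j=1}^D z_j² < ∞. Let Q_D = A_Dᵀ Ψ_D⁻² A_D and Q̂_D = Â_Dᵀ Ψ̂_D⁻² Â_D, and assume D⁻¹ Q_D → Q and D⁻¹ Q̂_D → Q̂ with Q, Q̂ symmetric positive definite and well-conditioned (condition numbers bounded over D). Define the factor score map w̃_D(A_D) = (I_p + Q_D)⁻¹ A_Dᵀ Ψ_D⁻² z_D. Then there exist constants K_D,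 bounded as D → ∞, such that ‖w̃_D(Â_D) − w̃_D(A_D)‖ ≤ K_D · √(D⁻¹ Σ_{j=1}^D ‖â_j − a_j‖²). -/
/-!
STATEMENT 14: Lipschitz continuity of the Gaussian `p`-factor regression factor scores in
the loading matrix.  With `A_D, Â_D` loading matrices with row norms `< 1`, individual
variances `ψ_j² = 1 − ‖a_j‖²` uniformly bounded away from `0`, a realization `z` with
`sup_D D⁻¹ Σ_{j<D} z_j² < ∞`, and `D⁻¹ Q_D → Q`, `D⁻¹ Q̂_D → Q̂` positive definite, the
factor score map `w̃_D(A_D) = (I_p + Q_D)⁻¹ A_Dᵀ Ψ_D⁻² z_D` satisfies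
`‖w̃_D(Â_D) − w̃_D(A_D)‖ ≤ K_D √(D⁻¹ Σ_j ‖â_j − a_j‖²)` with `K_D` bounded as `D → ∞`.
-/

open Matrix Filter Finset


noncomputable def enorm2 {n : ℕ} (v : Fin n → ℝ) : ℝ := Real.sqrt (∑ h, v h ^ 2)

lemma enorm2_nonneg {n : ℕ} (v : Fin n → ℝ) : 0 ≤ enorm2 v := Real.sqrt_nonneg _

lemma sq_enorm2 {n : ℕ} (v : Fin n → ℝ) : enorm2 v ^ 2 = ∑ h, v h ^ 2 :=
  Real.sq_sqrt (by positivity)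

lemma abs_apply_le_enorm2 {n : ℕ} (v : Fin n → ℝ) (h : Fin n) : |v h| ≤ enorm2 v := by
  rw [← Real.sqrt_sq_eq_abs]
  exact Real.sqrt_le_sqrt (Finset.single_le_sum (f := fun i => v i ^ 2)
    (fun i _ => sq_nonneg _) (mem_univ h))

lemma enorm2_le_of_forall {n : ℕ} (v : Fin n → ℝ) (b : ℝ) (hb : 0 ≤ b)
    (h : ∀ i, |v i| ≤ b) : enorm2 v ≤ Real.sqrt n * b := by
  have h1 : ∑ i, v i ^ 2 ≤ (n : ℝ) * b ^ 2 := by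
    calc ∑ i, v i ^ 2 ≤ ∑ _i : Fin n, b ^ 2 := by
          apply Finset.sum_le_sum
          intro i _
          rw [← sq_abs]
          exact pow_le_pow_left₀ (abs_nonneg _) (h i) 2
      _ = (n : ℝ) * b ^ 2 := by simp [mul_comm]
  calc enorm2 v ≤ Real.sqrt ((n : ℝ) * b ^ 2) := Real.sqrt_le_sqrt h1
    _ = Real.sqrt n * b := by
        rw [Real.sqrt_mul (by positivity), Real.sqrt_sq hb]

lemma cauchy_enorm2 {n : ℕ} (v w : Fin n → ℝ) :
    ∑ i, v i * w i ≤ enorm2 v * enorm2 w :=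
  Real.sum_mul_le_sqrt_mul_sqrt univ v w

lemma enorm2_triangle {n : ℕ} (v w : Fin n → ℝ) :
    enorm2 (fun i => v i + w i) ≤ enorm2 v + enorm2 w := by
  have h1 : ∑ i, (v i + w i) ^ 2 ≤ (enorm2 v + enorm2 w) ^ 2 := by
    have hc := cauchy_enorm2 v w
    have h2 : ∑ i, (v i + w i) ^ 2 = ∑ i, v i ^ 2 + 2 * ∑ i, v i * w i + ∑ i, w i ^ 2 := by
      rw [Finset.mul_sum, ← Finset.sum_add_distrib, ← Finset.sum_add_distrib]
      exact Finset.sum_congr rfl fun i _ => by ring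
    have hv2 := sq_enorm2 v
    have hw2 := sq_enorm2 w
    nlinarith [enorm2_nonneg v, enorm2_nonneg w]
  have hnn : 0 ≤ enorm2 v + enorm2 w := by
    have := enorm2_nonneg v; have := enorm2_nonneg w; linarith
  calc enorm2 (fun i => v i + w i) ≤ Real.sqrt ((enorm2 v + enorm2 w) ^ 2) :=
        Real.sqrt_le_sqrt h1
    _ = _ := Real.sqrt_sq hnn

lemma sumsq_pos {n : ℕ} {v : Fin n → ℝ} (hv : v ≠ 0) : 0 < ∑ h, v h ^ 2 := by
  rcases Function.ne_iff.mp hv with ⟨i, hi⟩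
  have hi' : v i ≠ 0 := hi
  have : 0 < v i ^ 2 := by positivity
  exact lt_of_lt_of_le this (Finset.single_le_sum (f := fun i => v i ^ 2)
    (fun i _ => sq_nonneg _) (mem_univ i))

lemma enorm2_def {n : ℕ} (v : Fin n → ℝ) : enorm2 v = Real.sqrt (∑ h, v h ^ 2) := rfl

lemma isUnit_det_of_form {p : ℕ} (M : Matrix (Fin p) (Fin p) ℝ)
    (hform : ∀ v : Fin p → ℝ, v ≠ 0 → 0 < v ⬝ᵥ M *ᵥ v) : IsUnit M.det := by
  rw [← isUnit_iff_isUnit_det, ← Matrix.mulVec_injective_iff_isUnit]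
  intro u v huv
  by_contra hne
  have hw : u - v ≠ 0 := sub_ne_zero.mpr hne
  have h0 : M *ᵥ (u - v) = 0 := by
    rw [Matrix.mulVec_sub, huv, sub_self]
  have := hform (u - v) hw
  rw [h0, dotProduct_zero] at this
  exact lt_irrefl 0 this

lemma key_inv_bound {p : ℕ} (Q : Matrix (Fin p) (Fin p) ℝ) (c : ℝ) (hc : 0 ≤ c)
    (hdet : IsUnit (1 + Q).det)
    (hform : ∀ v : Fin p → ℝ, c * ∑ h, v h ^ 2 ≤ v ⬝ᵥ Q *ᵥ v)
    (v : Fin p → ℝ) :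
    enorm2 ((1 + Q)⁻¹ *ᵥ v) ≤ (1 + c)⁻¹ * enorm2 v := by
  set u := (1 + Q)⁻¹ *ᵥ v with hu
  have huv : (1 + Q) *ᵥ u = v := by
    rw [hu, Matrix.mulVec_mulVec, Matrix.mul_nonsing_inv _ hdet, Matrix.one_mulVec]
  have h1 : u ⬝ᵥ v = ∑ h, u h ^ 2 + u ⬝ᵥ Q *ᵥ u := by
    rw [← huv, Matrix.add_mulVec, Matrix.one_mulVec, dotProduct_add]
    congr 1
    simp [dotProduct, sq]
  have hcs : u ⬝ᵥ v ≤ enorm2 u * enorm2 v := cauchy_enorm2 u v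
  have hform' := hform u
  have h2 : (1 + c) * enorm2 u ^ 2 ≤ enorm2 u * enorm2 v := by
    rw [sq_enorm2]
    nlinarith
  have h1c : (0:ℝ) < 1 + c := by linarith
  rcases eq_or_lt_of_le (enorm2_nonneg u) with h0 | h0
  · rw [← h0]
    exact mul_nonneg (by positivity) (enorm2_nonneg v)
  · rw [inv_mul_eq_div, le_div_iff₀ h1c]
    nlinarith
  
lemma quad_err {p : ℕ} (E : Matrix (Fin p) (Fin p) ℝ) (ε : ℝ) (hε : 0 ≤ ε)
    (hE : ∀ i k, |E i k| ≤ ε) (v : Fin p → ℝ) :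
    |v ⬝ᵥ E *ᵥ v| ≤ ε * p * ∑ h, v h ^ 2 := by
  have habs : |v ⬝ᵥ E *ᵥ v| ≤ ε * (∑ i, |v i|) ^ 2 := by
    calc |v ⬝ᵥ E *ᵥ v| ≤ ∑ i, |v i * (E *ᵥ v) i| := by
          simpa [dotProduct] using Finset.abs_sum_le_sum_abs (fun i => v i * (E *ᵥ v) i) univ
      _ ≤ ∑ i, |v i| * (ε * ∑ k, |v k|) := by
          apply Finset.sum_le_sum
          intro i _
          rw [abs_mul]
          apply mul_le_mul_of_nonneg_left _ (abs_nonneg _)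
          calc |(E *ᵥ v) i| ≤ ∑ k, |E i k * v k| := by
                simpa [Matrix.mulVec, dotProduct] using
                  Finset.abs_sum_le_sum_abs (fun k => E i k * v k) univ
            _ ≤ ∑ k, ε * |v k| := by
                apply Finset.sum_le_sum
                intro k _
                rw [abs_mul]
                exact mul_le_mul_of_nonneg_right (hE i k) (abs_nonneg _)
            _ = ε * ∑ k, |v k| := by rw [Finset.mul_sum]
      _ = ε * (∑ i, |v i|) ^ 2 := by
          rw [← Finset.sum_mul]; ring
  have hsq : (∑ i, |v i|) ^ 2 ≤ (p : ℝ) * ∑ h, v h ^ 2 := by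
    have := sq_sum_le_card_mul_sum_sq (s := (univ : Finset (Fin p))) (f := fun i => |v i|)
    simpa [sq_abs] using this
  calc |v ⬝ᵥ E *ᵥ v| ≤ ε * (∑ i, |v i|) ^ 2 := habs
    _ ≤ ε * ((p:ℝ) * ∑ h, v h ^ 2) := by
        exact mul_le_mul_of_nonneg_left hsq hε
    _ = ε * p * ∑ h, v h ^ 2 := by ring

lemma enorm2_mulVec_le {p : ℕ} (M : Matrix (Fin p) (Fin p) ℝ) (w : Fin p → ℝ) (b : ℝ)
    (hb : 0 ≤ b) (hM : ∀ i k, |M i k| ≤ b) :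
    enorm2 (M *ᵥ w) ≤ p * b * enorm2 w := by
  have hcomp : ∀ i, |(M *ᵥ w) i| ≤ Real.sqrt p * (b * enorm2 w) := by
    intro i
    calc |(M *ᵥ w) i| ≤ ∑ k, |M i k * w k| := by
          simpa [Matrix.mulVec, dotProduct] using
            Finset.abs_sum_le_sum_abs (fun k => M i k * w k) univ
      _ ≤ ∑ k, b * |w k| := by
          apply Finset.sum_le_sum; intro k _
          rw [abs_mul]
          exact mul_le_mul_of_nonneg_right (hM i k) (abs_nonneg _)
      _ = b * ∑ k, 1 * |w k| := by rw [Finset.mul_sum]; simp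
      _ ≤ b * (Real.sqrt (∑ _k : Fin p, (1:ℝ) ^ 2) * Real.sqrt (∑ k, |w k| ^ 2)) := by
          apply mul_le_mul_of_nonneg_left _ hb
          exact Real.sum_mul_le_sqrt_mul_sqrt univ _ _
      _ = Real.sqrt p * (b * enorm2 w) := by
          rw [show ∑ _k : Fin p, (1:ℝ)^2 = (p:ℝ) by simp]
          have : ∀ k, |w k| ^ 2 = w k ^ 2 := fun k => sq_abs _
          simp only [this]
          rw [show Real.sqrt (∑ k, w k ^2) = enorm2 w from (by rw [← sq_enorm2 w, Real.sqrt_sq (enorm2_nonneg w)])]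
          ring
  calc enorm2 (M *ᵥ w) ≤ Real.sqrt p * (Real.sqrt p * (b * enorm2 w)) :=
        enorm2_le_of_forall _ _
          (mul_nonneg (Real.sqrt_nonneg _) (mul_nonneg hb (enorm2_nonneg w))) hcomp
    _ = p * b * enorm2 w := by
        rw [← mul_assoc, ← Real.sqrt_mul (by positivity), Real.sqrt_mul_self (by positivity : (0:ℝ) ≤ (p:ℝ))]
        ring

lemma mulDiag_apply {D p : ℕ} (A : Matrix (Fin D) (Fin p) ℝ) (d : Fin D → ℝ) (i k : Fin p) :
    (Aᵀ * Matrix.diagonal d * A) i k = ∑ j, d j * (A j i * A j k) := by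
  rw [Matrix.mul_apply]
  exact Finset.sum_congr rfl fun j _ => by
    rw [Matrix.mul_diagonal, Matrix.transpose_apply]; ring

lemma mulDiag_mulVec_apply {D p : ℕ} (A : Matrix (Fin D) (Fin p) ℝ) (d : Fin D → ℝ)
    (z : Fin D → ℝ) (i : Fin p) :
    ((Aᵀ * Matrix.diagonal d) *ᵥ z) i = ∑ j, d j * A j i * z j := by
  rw [Matrix.mulVec]
  simp only [dotProduct]
  exact Finset.sum_congr rfl fun j _ => by
    rw [Matrix.mul_diagonal, Matrix.transpose_apply]; ring

lemma posdef_coercive {p : ℕ} (hp : 0 < p) (M : Matrix (Fin p) (Fin p) ℝ) (hM : M.PosDef) :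
    ∃ lam > (0:ℝ), ∀ v : Fin p → ℝ, lam * ∑ h, v h ^ 2 ≤ v ⬝ᵥ M *ᵥ v := by
  classical
  set E := EuclideanSpace ℝ (Fin p)
  let f : E → ℝ := fun v => (v : Fin p → ℝ) ⬝ᵥ M *ᵥ (v : Fin p → ℝ)
  have hf : Continuous f := by
    have hco : Continuous fun v : E => (v : Fin p → ℝ) :=
      PiLp.continuous_ofLp 2 (fun _ : Fin p => ℝ)
    have hg : Continuous fun x : Fin p → ℝ => ∑ i, x i * ∑ j, M i j * x j := by
      continuity
    exact hg.comp hco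
  have hne : (Metric.sphere (0 : E) 1).Nonempty := by
    refine ⟨EuclideanSpace.single ⟨0, hp⟩ 1, ?_⟩
    rw [mem_sphere_zero_iff_norm, EuclideanSpace.norm_single]
    norm_num
  obtain ⟨v0, hv0mem, hmin⟩ :=
    (isCompact_sphere (0 : E) 1).exists_isMinOn hne hf.continuousOn
  have hv0norm : ‖v0‖ = 1 := mem_sphere_zero_iff_norm.mp hv0mem
  have hv0ne : (v0 : Fin p → ℝ) ≠ 0 := by
    intro h
    have : v0 = 0 := by
      apply (WithLp.equiv 2 _).injective
      simpa using h
    rw [this] at hv0norm; simp at hv0norm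
  have hlam : 0 < f v0 := by
    have := hM.dotProduct_mulVec_pos hv0ne
    simpa [f] using this
  refine ⟨f v0, hlam, ?_⟩
  intro v
  by_cases hv : v = 0
  · simp [hv]
  · set ve : E := (WithLp.equiv 2 (Fin p → ℝ)).symm v with hve
    have hvene : ve ≠ 0 := by
      simp [hve]
      intro h
      exact hv (by simpa using congrArg (WithLp.equiv 2 (Fin p → ℝ)) h)
    have ht : 0 < ‖ve‖ := norm_pos_iff.mpr hvene
    have hw : (‖ve‖⁻¹ • ve) ∈ Metric.sphere (0 : E) 1 := by
      simp [norm_smul, abs_of_pos (inv_pos.mpr ht), inv_mul_cancel₀ ht.ne']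
    have hminw := hmin hw
    have hfw : f (‖ve‖⁻¹ • ve) = ‖ve‖⁻¹ ^ 2 * (v ⬝ᵥ M *ᵥ v) := by
      have hco : ((‖ve‖⁻¹ • ve : E) : Fin p → ℝ) = ‖ve‖⁻¹ • v := by
        funext i
        rfl
      simp only [f, hco]
      rw [Matrix.mulVec_smul, smul_dotProduct, dotProduct_smul]
      simp [smul_smul, sq]
      ring
    have hnsq : ‖ve‖ ^ 2 = ∑ h, v h ^ 2 := by
      rw [EuclideanSpace.norm_eq]
      rw [Real.sq_sqrt (by positivity)]
      apply Finset.sum_congr rfl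
      intro i _
      rw [Real.norm_eq_abs, sq_abs]
      rfl
    have h1 : f v0 ≤ ‖ve‖⁻¹ ^ 2 * (v ⬝ᵥ M *ᵥ v) := by
      rw [← hfw]; exact hminw
    have h2 : f v0 * ‖ve‖ ^ 2 ≤ v ⬝ᵥ M *ᵥ v := by
      have hts : (0:ℝ) < ‖ve‖ ^ 2 := by positivity
      have h3 := mul_le_mul_of_nonneg_right h1 hts.le
      calc f v0 * ‖ve‖ ^ 2 ≤ ‖ve‖⁻¹ ^ 2 * (v ⬝ᵥ M *ᵥ v) * ‖ve‖ ^ 2 := h3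
        _ = v ⬝ᵥ M *ᵥ v := by field_simp
    rw [← hnsq]
    linarith

lemma inv_sub_inv'' {x y : ℝ} (hx : x ≠ 0) (hy : y ≠ 0) :
    x⁻¹ - y⁻¹ = (y - x) * y⁻¹ * x⁻¹ := by
  field_simp

noncomputable def Kconst (p : ℕ) (δ C lam : ℝ) : ℝ :=
  Real.sqrt p * (δ⁻¹ + 2 * Real.sqrt p * δ⁻¹ ^ 2) * Real.sqrt C / lam +
  p * ((δ⁻¹ + 2 * Real.sqrt p * δ⁻¹ ^ 2) + δ⁻¹) * (Real.sqrt p * δ⁻¹ * Real.sqrt C / lam) / lam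

lemma Kconst_nonneg (p : ℕ) {δ C lam : ℝ} (hδ : 0 < δ) (hC : 0 ≤ C) (hlam : 0 < lam) :
    0 ≤ Kconst p δ C lam := by
  unfold Kconst
  positivity

lemma main_estimate {p D : ℕ} (hD : 0 < D)
    (A Ah : Matrix (Fin D) (Fin p) ℝ)
    (hrow : ∀ j, ∑ h, A j h ^ 2 < 1) (hrowh : ∀ j, ∑ h, Ah j h ^ 2 < 1)
    (δ : ℝ) (hδ0 : 0 < δ)
    (hδ1 : ∀ j, δ ≤ 1 - ∑ h, A j h ^ 2) (hδ2 : ∀ j, δ ≤ 1 - ∑ h, Ah j h ^ 2)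
    (z : Fin D → ℝ) (C : ℝ) (hC0 : 0 ≤ C) (hzC : ∑ j, z j ^ 2 ≤ C * D)
    (Q Qh : Matrix (Fin p) (Fin p) ℝ)
    (hQm : Q = Aᵀ * Matrix.diagonal (fun j => (1 - ∑ h, A j h ^ 2)⁻¹) * A)
    (hQhm : Qh = Ahᵀ * Matrix.diagonal (fun j => (1 - ∑ h, Ah j h ^ 2)⁻¹) * Ah)
    (lam : ℝ) (hlam : 0 < lam)
    (hQform : ∀ v : Fin p → ℝ, lam * D * ∑ h, v h ^ 2 ≤ v ⬝ᵥ Q *ᵥ v)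
    (hQhform : ∀ v : Fin p → ℝ, lam * D * ∑ h, v h ^ 2 ≤ v ⬝ᵥ Qh *ᵥ v)
    (wt wth : Fin p → ℝ)
    (hwt : wt = ((1 + Q)⁻¹ * Aᵀ *
      Matrix.diagonal (fun j => (1 - ∑ h, A j h ^ 2)⁻¹)) *ᵥ z)
    (hwth : wth = ((1 + Qh)⁻¹ * Ahᵀ *
      Matrix.diagonal (fun j => (1 - ∑ h, Ah j h ^ 2)⁻¹)) *ᵥ z) :
    enorm2 (fun h => wth h - wt h) ≤
      Kconst p δ C lam * Real.sqrt ((D:ℝ)⁻¹ * ∑ j, ∑ h, (Ah j h - A j h) ^ 2) := by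
  have hDpos : (0:ℝ) < D := by exact_mod_cast hD
  have hδinv : (0:ℝ) < δ⁻¹ := by positivity
  set Cc : ℝ := δ⁻¹ + 2 * Real.sqrt p * δ⁻¹ ^ 2 with hCc
  have hCc0 : 0 ≤ Cc := by positivity
  set ψ : Fin D → ℝ := fun j => (1 - ∑ h, A j h ^ 2)⁻¹ with hψ
  set ψh : Fin D → ℝ := fun j => (1 - ∑ h, Ah j h ^ 2)⁻¹ with hψh
  set dA : Fin D → ℝ := fun j => enorm2 (fun h => Ah j h - A j h) with hdA
  set S : ℝ := Real.sqrt ((D:ℝ)⁻¹ * ∑ j, ∑ h, (Ah j h - A j h) ^ 2) with hS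
  have hS0 : 0 ≤ S := Real.sqrt_nonneg _
  have hT0 : (0:ℝ) ≤ ∑ j, ∑ h, (Ah j h - A j h) ^ 2 := by positivity
  have hSsq : ∑ j, ∑ h, (Ah j h - A j h) ^ 2 = D * S ^ 2 := by
    have h1 : S ^ 2 = (D:ℝ)⁻¹ * ∑ j, ∑ h, (Ah j h - A j h) ^ 2 := by
      rw [hS]; exact Real.sq_sqrt (by positivity)
    rw [h1, ← mul_assoc, mul_inv_cancel₀ (ne_of_gt hDpos), one_mul]
  have hdA0 : ∀ j, 0 ≤ dA j := fun j => enorm2_nonneg _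
  have hsum_dA_sq : ∑ j, dA j ^ 2 = D * S ^ 2 := by
    rw [← hSsq]
    exact Finset.sum_congr rfl fun j _ => sq_enorm2 _
  have hsum_dA : ∑ j, dA j ≤ D * S := by
    have h1 : (∑ j, dA j) ^ 2 ≤ (D : ℝ) * ∑ j, dA j ^ 2 := by
      simpa using sq_sum_le_card_mul_sum_sq (s := (univ : Finset (Fin D))) (f := dA)
    have h2 : (∑ j, dA j) ^ 2 ≤ ((D:ℝ) * S) ^ 2 := by
      rw [hsum_dA_sq] at h1
      calc (∑ j, dA j)^2 ≤ (D:ℝ) * ((D:ℝ) * S ^2) := h1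
        _ = ((D:ℝ) * S)^2 := by ring
    calc ∑ j, dA j = Real.sqrt ((∑ j, dA j) ^ 2) :=
          (Real.sqrt_sq (Finset.sum_nonneg fun j _ => hdA0 j)).symm
      _ ≤ Real.sqrt (((D:ℝ) * S) ^ 2) := Real.sqrt_le_sqrt h2
      _ = (D:ℝ) * S := Real.sqrt_sq (by positivity)
  -- ψ bounds
  have hψpos : ∀ j, 0 < 1 - ∑ h, A j h ^ 2 := fun j => lt_of_lt_of_le hδ0 (hδ1 j)
  have hψhpos : ∀ j, 0 < 1 - ∑ h, Ah j h ^ 2 := fun j => lt_of_lt_of_le hδ0 (hδ2 j)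
  have hψle : ∀ j, ψ j ≤ δ⁻¹ := fun j => inv_anti₀ hδ0 (hδ1 j)
  have hψhle : ∀ j, ψh j ≤ δ⁻¹ := fun j => inv_anti₀ hδ0 (hδ2 j)
  have hψpos' : ∀ j, 0 < ψ j := fun j => by
    have := hψpos j; positivity
  have hψhpos' : ∀ j, 0 < ψh j := fun j => by
    have := hψhpos j; positivity
  -- entry bounds
  have habsA : ∀ (j : Fin D) (h : Fin p), |A j h| ≤ 1 := by
    intro j h
    have h1 : A j h ^ 2 ≤ 1 :=
      le_of_lt (lt_of_le_of_lt (Finset.single_le_sum (f := fun i => A j i ^ 2)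
        (fun i _ => sq_nonneg _) (mem_univ h)) (hrow j))
    calc |A j h| = Real.sqrt (A j h ^ 2) := (Real.sqrt_sq_eq_abs _).symm
      _ ≤ Real.sqrt 1 := Real.sqrt_le_sqrt h1
      _ = 1 := Real.sqrt_one
  have habsAh : ∀ (j : Fin D) (h : Fin p), |Ah j h| ≤ 1 := by
    intro j h
    have h1 : Ah j h ^ 2 ≤ 1 :=
      le_of_lt (lt_of_le_of_lt (Finset.single_le_sum (f := fun i => Ah j i ^ 2)
        (fun i _ => sq_nonneg _) (mem_univ h)) (hrowh j))
    calc |Ah j h| = Real.sqrt (Ah j h ^ 2) := (Real.sqrt_sq_eq_abs _).symm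
      _ ≤ Real.sqrt 1 := Real.sqrt_le_sqrt h1
      _ = 1 := Real.sqrt_one
  have habsΔ : ∀ (j : Fin D) (h : Fin p), |Ah j h - A j h| ≤ dA j := by
    intro j h
    exact abs_apply_le_enorm2 (fun i => Ah j i - A j i) h
  -- sum of |Δ| over h
  have hsumΔ : ∀ j, ∑ h, |Ah j h - A j h| ≤ Real.sqrt p * dA j := by
    intro j
    have h1 := Real.sum_mul_le_sqrt_mul_sqrt (univ : Finset (Fin p))
      (fun _ => (1:ℝ)) (fun h => |Ah j h - A j h|)
    simp only [one_mul, one_pow, sq_abs] at h1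
    calc ∑ h, |Ah j h - A j h| ≤
          Real.sqrt (∑ _h : Fin p, (1:ℝ)) * Real.sqrt (∑ h, (Ah j h - A j h) ^ 2) := h1
      _ = Real.sqrt p * dA j := by
          have e0 : (∑ _h : Fin p, (1:ℝ)) = (p:ℝ) := by simp
          rw [e0]
          simp only [hdA, enorm2_def]
  -- ψ difference
  have hψdiff : ∀ j, |ψh j - ψ j| ≤ 2 * Real.sqrt p * δ⁻¹ ^ 2 * dA j := by
    intro j
    have hx := hψhpos j
    have hy := hψpos j
    have hid : ψh j - ψ j =
        ((1 - ∑ h, A j h ^ 2) - (1 - ∑ h, Ah j h ^ 2)) * ψ j * ψh j :=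
      inv_sub_inv'' (ne_of_gt hx) (ne_of_gt hy)
    have hdiffsum : |(1 - ∑ h, A j h ^ 2) - (1 - ∑ h, Ah j h ^ 2)| ≤
        2 * (Real.sqrt p * dA j) := by
      have he : (1 - ∑ h, A j h ^ 2) - (1 - ∑ h, Ah j h ^ 2)
          = ∑ h, (Ah j h - A j h) * (Ah j h + A j h) := by
        have e0 : ∀ h : Fin p, (Ah j h - A j h) * (Ah j h + A j h)
            = Ah j h ^ 2 - A j h ^ 2 := fun h => by ring
        rw [Finset.sum_congr rfl fun h _ => e0 h, Finset.sum_sub_distrib]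
        ring
      rw [he]
      calc |∑ h, (Ah j h - A j h) * (Ah j h + A j h)|
          ≤ ∑ h, |(Ah j h - A j h) * (Ah j h + A j h)| :=
            Finset.abs_sum_le_sum_abs _ _
        _ ≤ ∑ h, |Ah j h - A j h| * 2 := by
            apply Finset.sum_le_sum
            intro h _
            rw [abs_mul]
            apply mul_le_mul_of_nonneg_left _ (abs_nonneg _)
            calc |Ah j h + A j h| ≤ |Ah j h| + |A j h| := abs_add_le _ _
              _ ≤ 2 := by have := habsA j h; have := habsAh j h; linarith
        _ = 2 * ∑ h, |Ah j h - A j h| := by rw [← Finset.sum_mul]; ring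
        _ ≤ 2 * (Real.sqrt p * dA j) := by
            have := hsumΔ j; linarith
    calc |ψh j - ψ j| = |(1 - ∑ h, A j h ^ 2) - (1 - ∑ h, Ah j h ^ 2)| * ψ j * ψh j := by
          rw [hid, abs_mul, abs_mul, abs_of_pos (hψpos' j), abs_of_pos (hψhpos' j)]
      _ ≤ (2 * (Real.sqrt p * dA j)) * δ⁻¹ * δ⁻¹ := by
          have hnn : (0:ℝ) ≤ 2 * (Real.sqrt p * dA j) :=
            mul_nonneg (by norm_num) (mul_nonneg (Real.sqrt_nonneg _) (hdA0 j))
          apply mul_le_mul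
          · exact mul_le_mul hdiffsum (hψle j) (le_of_lt (hψpos' j)) hnn
          · exact hψhle j
          · exact le_of_lt (hψhpos' j)
          · exact mul_nonneg hnn hδinv.le
      _ = 2 * Real.sqrt p * δ⁻¹ ^ 2 * dA j := by ring
  -- coefficient bound
  have hcoeff : ∀ (j : Fin D) (h : Fin p),
      |ψh j * Ah j h - ψ j * A j h| ≤ Cc * dA j := by
    intro j h
    have hid : ψh j * Ah j h - ψ j * A j h
        = (ψh j - ψ j) * Ah j h + ψ j * (Ah j h - A j h) := by ring
    calc |ψh j * Ah j h - ψ j * A j h|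
        ≤ |(ψh j - ψ j) * Ah j h| + |ψ j * (Ah j h - A j h)| := by
          rw [hid]; exact abs_add_le _ _
      _ ≤ (2 * Real.sqrt p * δ⁻¹ ^ 2 * dA j) * 1 + δ⁻¹ * dA j := by
          apply add_le_add
          · rw [abs_mul]
            exact mul_le_mul (hψdiff j) (habsAh j h) (abs_nonneg _)
              (mul_nonneg (by positivity) (hdA0 j))
          · rw [abs_mul, abs_of_pos (hψpos' j)]
            exact mul_le_mul (hψle j) (habsΔ j h) (abs_nonneg _) (by positivity)
      _ = Cc * dA j := by rw [hCc]; ring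
  -- Q entry difference
  have hQent : ∀ i k, Q i k = ∑ j, ψ j * (A j i * A j k) := by
    intro i k; rw [hQm]; exact mulDiag_apply A _ i k
  have hQhent : ∀ i k, Qh i k = ∑ j, ψh j * (Ah j i * Ah j k) := by
    intro i k; rw [hQhm]; exact mulDiag_apply Ah _ i k
  have hQdiff : ∀ i k, |(Q - Qh) i k| ≤ (Cc + δ⁻¹) * ((D:ℝ) * S) := by
    intro i k
    have h1 : (Q - Qh) i k = ∑ j, (ψ j * (A j i * A j k) - ψh j * (Ah j i * Ah j k)) := by
      rw [Matrix.sub_apply, hQent, hQhent, ← Finset.sum_sub_distrib]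
    rw [h1]
    calc |∑ j, (ψ j * (A j i * A j k) - ψh j * (Ah j i * Ah j k))|
        ≤ ∑ j, |ψ j * (A j i * A j k) - ψh j * (Ah j i * Ah j k)| :=
          Finset.abs_sum_le_sum_abs _ _
      _ ≤ ∑ j, (Cc + δ⁻¹) * dA j := by
          apply Finset.sum_le_sum
          intro j _
          have hid : ψ j * (A j i * A j k) - ψh j * (Ah j i * Ah j k)
              = (ψ j * A j i - ψh j * Ah j i) * A j k
                + ψh j * Ah j i * (A j k - Ah j k) := by ring
          calc |ψ j * (A j i * A j k) - ψh j * (Ah j i * Ah j k)|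
              ≤ |(ψ j * A j i - ψh j * Ah j i) * A j k|
                + |ψh j * Ah j i * (A j k - Ah j k)| := by
                rw [hid]; exact abs_add_le _ _
            _ ≤ (Cc * dA j) * 1 + δ⁻¹ * 1 * dA j := by
                apply add_le_add
                · rw [abs_mul]
                  apply mul_le_mul _ (habsA j k) (abs_nonneg _)
                    (mul_nonneg hCc0 (hdA0 j))
                  rw [abs_sub_comm]
                  exact hcoeff j i
                · rw [abs_mul, abs_mul, abs_of_pos (hψhpos' j)]
                  apply mul_le_mul
                  · exact mul_le_mul (hψhle j) (habsAh j i) (abs_nonneg _) (by positivity)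
                  · rw [abs_sub_comm]; exact habsΔ j k
                  · exact abs_nonneg _
                  · positivity
            _ = (Cc + δ⁻¹) * dA j := by ring
      _ = (Cc + δ⁻¹) * ∑ j, dA j := by rw [← Finset.mul_sum]
      _ ≤ (Cc + δ⁻¹) * ((D:ℝ) * S) := by
          exact mul_le_mul_of_nonneg_left hsum_dA (add_nonneg hCc0 hδinv.le)
  -- z bounds
  have hsumz : ∑ j, |z j| ≤ Real.sqrt D * Real.sqrt (C * D) := by
    have h1 := Real.sum_mul_le_sqrt_mul_sqrt (univ : Finset (Fin D))
      (fun _ => (1:ℝ)) (fun j => |z j|)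
    simp only [one_mul, one_pow, sq_abs] at h1
    calc ∑ j, |z j| ≤ Real.sqrt (∑ _j : Fin D, (1:ℝ)) * Real.sqrt (∑ j, z j ^ 2) := h1
      _ ≤ Real.sqrt D * Real.sqrt (C * D) := by
          apply mul_le_mul
          · apply Real.sqrt_le_sqrt; simp
          · exact Real.sqrt_le_sqrt hzC
          · positivity
          · positivity
  have hsqCD : Real.sqrt D * Real.sqrt (C * D) = Real.sqrt C * D := by
    rw [Real.sqrt_mul hC0, ← mul_assoc, mul_comm (Real.sqrt D), mul_assoc,
      Real.mul_self_sqrt (le_of_lt hDpos)]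
  -- B z vectors
  set Bz : Fin p → ℝ := (Aᵀ * Matrix.diagonal ψ) *ᵥ z with hBz
  set Bhz : Fin p → ℝ := (Ahᵀ * Matrix.diagonal ψh) *ᵥ z with hBhz
  have hBzcomp : ∀ i, |Bz i| ≤ δ⁻¹ * (Real.sqrt C * D) := by
    intro i
    rw [hBz, mulDiag_mulVec_apply]
    calc |∑ j, ψ j * A j i * z j| ≤ ∑ j, |ψ j * A j i * z j| :=
          Finset.abs_sum_le_sum_abs _ _
      _ ≤ ∑ j, δ⁻¹ * |z j| := by
          apply Finset.sum_le_sum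
          intro j _
          rw [abs_mul, abs_mul, abs_of_pos (hψpos' j)]
          apply mul_le_mul_of_nonneg_right _ (abs_nonneg _)
          calc ψ j * |A j i| ≤ δ⁻¹ * 1 :=
                mul_le_mul (hψle j) (habsA j i) (abs_nonneg _) (by positivity)
            _ = δ⁻¹ := mul_one _
      _ = δ⁻¹ * ∑ j, |z j| := by rw [← Finset.mul_sum]
      _ ≤ δ⁻¹ * (Real.sqrt C * D) := by
          rw [← hsqCD]
          exact mul_le_mul_of_nonneg_left hsumz (by positivity)
  have hBzbound : enorm2 Bz ≤ Real.sqrt p * (δ⁻¹ * (Real.sqrt C * D)) :=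
    enorm2_le_of_forall _ _ (by positivity) hBzcomp
  have hΔBcomp : ∀ i, |Bhz i - Bz i| ≤ Cc * (Real.sqrt C * ((D:ℝ) * S)) := by
    intro i
    rw [hBz, hBhz, mulDiag_mulVec_apply, mulDiag_mulVec_apply, ← Finset.sum_sub_distrib]
    calc |∑ j, (ψh j * Ah j i * z j - ψ j * A j i * z j)|
        ≤ ∑ j, |(ψh j * Ah j i - ψ j * A j i) * z j| := by
          refine le_trans (Finset.abs_sum_le_sum_abs _ _) ?_
          apply Finset.sum_le_sum
          intro j _
          apply le_of_eq
          congr 1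
          ring
      _ ≤ ∑ j, (Cc * dA j) * |z j| := by
          apply Finset.sum_le_sum
          intro j _
          rw [abs_mul]
          exact mul_le_mul_of_nonneg_right (hcoeff j i) (abs_nonneg _)
      _ = Cc * ∑ j, dA j * |z j| := by
          rw [Finset.mul_sum]
          exact Finset.sum_congr rfl fun j _ => by ring
      _ ≤ Cc * (Real.sqrt (∑ j, dA j ^ 2) * Real.sqrt (∑ j, |z j| ^ 2)) := by
          apply mul_le_mul_of_nonneg_left _ hCc0
          exact Real.sum_mul_le_sqrt_mul_sqrt univ dA (fun j => |z j|)
      _ ≤ Cc * (Real.sqrt C * ((D:ℝ) * S)) := by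
          apply mul_le_mul_of_nonneg_left _ hCc0
          have e1 : Real.sqrt (∑ j, dA j ^ 2) = Real.sqrt D * S := by
            rw [hsum_dA_sq, Real.sqrt_mul (le_of_lt hDpos), Real.sqrt_sq hS0]
          have e2 : Real.sqrt (∑ j, |z j| ^ 2) ≤ Real.sqrt (C * D) := by
            apply Real.sqrt_le_sqrt
            simp only [sq_abs]
            exact hzC
          calc Real.sqrt (∑ j, dA j ^ 2) * Real.sqrt (∑ j, |z j| ^ 2)
              ≤ (Real.sqrt D * S) * Real.sqrt (C * D) := by
                rw [e1]
                exact mul_le_mul_of_nonneg_left e2 (by positivity)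
            _ = (Real.sqrt D * Real.sqrt (C * D)) * S := by ring
            _ = Real.sqrt C * ((D:ℝ) * S) := by rw [hsqCD]; ring
  have hΔBbound : enorm2 (fun i => Bhz i - Bz i) ≤
      Real.sqrt p * (Cc * (Real.sqrt C * ((D:ℝ) * S))) :=
    enorm2_le_of_forall _ _ (mul_nonneg hCc0
      (mul_nonneg (Real.sqrt_nonneg _) (mul_nonneg hDpos.le hS0))) hΔBcomp
  -- invertibility
  have hform1Q : ∀ v : Fin p → ℝ, v ≠ 0 → 0 < v ⬝ᵥ (1 + Q) *ᵥ v := by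
    intro v hv
    rw [Matrix.add_mulVec, Matrix.one_mulVec, dotProduct_add]
    have h1 : v ⬝ᵥ v = ∑ h, v h ^ 2 := by simp [dotProduct, sq]
    have h2 := hQform v
    have h3 := sumsq_pos hv
    have h4 : 0 ≤ lam * D * ∑ h, v h ^ 2 := by positivity
    rw [h1]
    linarith
  have hform1Qh : ∀ v : Fin p → ℝ, v ≠ 0 → 0 < v ⬝ᵥ (1 + Qh) *ᵥ v := by
    intro v hv
    rw [Matrix.add_mulVec, Matrix.one_mulVec, dotProduct_add]
    have h1 : v ⬝ᵥ v = ∑ h, v h ^ 2 := by simp [dotProduct, sq]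
    have h2 := hQhform v
    have h3 := sumsq_pos hv
    have h4 : 0 ≤ lam * D * ∑ h, v h ^ 2 := by positivity
    rw [h1]
    linarith
  have hdet : IsUnit (1 + Q).det := isUnit_det_of_form _ hform1Q
  have hdeth : IsUnit (1 + Qh).det := isUnit_det_of_form _ hform1Qh
  -- factor scores
  have hwt' : wt = (1 + Q)⁻¹ *ᵥ Bz := by
    rw [hwt, hBz, Matrix.mulVec_mulVec, Matrix.mul_assoc]
  have hwth' : wth = (1 + Qh)⁻¹ *ᵥ Bhz := by
    rw [hwth, hBhz, Matrix.mulVec_mulVec, Matrix.mul_assoc]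
  have hQwt : (1 + Q) *ᵥ wt = Bz := by
    rw [hwt', Matrix.mulVec_mulVec, Matrix.mul_nonsing_inv _ hdet, Matrix.one_mulVec]
  have hQhwth : (1 + Qh) *ᵥ wth = Bhz := by
    rw [hwth', Matrix.mulVec_mulVec, Matrix.mul_nonsing_inv _ hdeth, Matrix.one_mulVec]
  -- key identity
  set r : Fin p → ℝ := fun i => (Bhz i - Bz i) + ((Q - Qh) *ᵥ wt) i with hr
  have hkey : (fun h => wth h - wt h) = (1 + Qh)⁻¹ *ᵥ r := by
    have h1 : (1 + Qh) *ᵥ (wth - wt) = r := by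
      funext i
      have e1 : ((1 + Qh) *ᵥ (wth - wt)) i
          = ((1 + Qh) *ᵥ wth) i - ((1 + Qh) *ᵥ wt) i := by
        rw [Matrix.mulVec_sub]; rfl
      have e2 : ((1 + Qh) *ᵥ wt) i = wt i + (Qh *ᵥ wt) i := by
        rw [Matrix.add_mulVec, Matrix.one_mulVec]; rfl
      have e3 : Bz i = wt i + (Q *ᵥ wt) i := by
        rw [← hQwt, Matrix.add_mulVec, Matrix.one_mulVec]; rfl
      have e4 : ((Q - Qh) *ᵥ wt) i = (Q *ᵥ wt) i - (Qh *ᵥ wt) i := by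
        rw [Matrix.sub_mulVec]; rfl
      rw [hr]
      simp only [e1, hQhwth, e2, e4]
      rw [e3]
      ring
    calc (fun h => wth h - wt h) = wth - wt := rfl
      _ = (1 + Qh)⁻¹ *ᵥ ((1 + Qh) *ᵥ (wth - wt)) := by
          rw [Matrix.mulVec_mulVec, Matrix.nonsing_inv_mul _ hdeth, Matrix.one_mulVec]
      _ = (1 + Qh)⁻¹ *ᵥ r := by rw [h1]
  -- norm bounds
  have hrbound : enorm2 r ≤
      Real.sqrt p * (Cc * (Real.sqrt C * ((D:ℝ) * S)))
        + (p : ℝ) * ((Cc + δ⁻¹) * ((D:ℝ) * S)) * enorm2 wt := by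
    calc enorm2 r ≤ enorm2 (fun i => Bhz i - Bz i) + enorm2 ((Q - Qh) *ᵥ wt) :=
          enorm2_triangle _ _
      _ ≤ Real.sqrt p * (Cc * (Real.sqrt C * ((D:ℝ) * S)))
            + (p : ℝ) * ((Cc + δ⁻¹) * ((D:ℝ) * S)) * enorm2 wt := by
          apply add_le_add hΔBbound
          exact enorm2_mulVec_le _ _ _ (mul_nonneg (add_nonneg hCc0 hδinv.le)
            (mul_nonneg hDpos.le hS0)) hQdiff
  have hwtbound : enorm2 wt ≤ Real.sqrt p * δ⁻¹ * Real.sqrt C / lam := by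
    have h1 : enorm2 wt ≤ (1 + lam * D)⁻¹ * enorm2 Bz := by
      rw [hwt']
      exact key_inv_bound Q (lam * D) (by positivity) hdet
        (fun v => hQform v) Bz
    have h2 : (1 + lam * (D:ℝ))⁻¹ ≤ (lam * D)⁻¹ := by
      apply inv_anti₀ (by positivity)
      linarith
    calc enorm2 wt ≤ (1 + lam * D)⁻¹ * enorm2 Bz := h1
      _ ≤ (lam * D)⁻¹ * (Real.sqrt p * (δ⁻¹ * (Real.sqrt C * D))) := by
          apply mul_le_mul h2 hBzbound (enorm2_nonneg _) (by positivity)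
      _ = Real.sqrt p * δ⁻¹ * Real.sqrt C / lam := by
          field_simp
  have hfinal : enorm2 (fun h => wth h - wt h) ≤ (lam * D)⁻¹ *
      (Real.sqrt p * (Cc * (Real.sqrt C * ((D:ℝ) * S)))
        + (p : ℝ) * ((Cc + δ⁻¹) * ((D:ℝ) * S)) * (Real.sqrt p * δ⁻¹ * Real.sqrt C / lam)) := by
    have h1 : enorm2 (fun h => wth h - wt h) ≤ (1 + lam * D)⁻¹ * enorm2 r := by
      rw [hkey]
      exact key_inv_bound Qh (lam * D) (by positivity) hdeth (fun v => hQhform v) r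
    have h2 : (1 + lam * (D:ℝ))⁻¹ ≤ (lam * D)⁻¹ := by
      apply inv_anti₀ (by positivity)
      linarith
    have h3 : enorm2 r ≤
        Real.sqrt p * (Cc * (Real.sqrt C * ((D:ℝ) * S)))
          + (p : ℝ) * ((Cc + δ⁻¹) * ((D:ℝ) * S)) * (Real.sqrt p * δ⁻¹ * Real.sqrt C / lam) := by
      refine le_trans hrbound ?_
      apply add_le_add le_rfl
      exact mul_le_mul_of_nonneg_left hwtbound
        (mul_nonneg (Nat.cast_nonneg p) (mul_nonneg (add_nonneg hCc0 hδinv.le)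
          (mul_nonneg hDpos.le hS0)))
    calc enorm2 (fun h => wth h - wt h) ≤ (1 + lam * D)⁻¹ * enorm2 r := h1
      _ ≤ (lam * D)⁻¹ * (Real.sqrt p * (Cc * (Real.sqrt C * ((D:ℝ) * S)))
            + (p : ℝ) * ((Cc + δ⁻¹) * ((D:ℝ) * S)) * (Real.sqrt p * δ⁻¹ * Real.sqrt C / lam)) := by
          apply mul_le_mul h2 h3 (enorm2_nonneg _) (by positivity)
  have hD0 : (D:ℝ) ≠ 0 := ne_of_gt hDpos
  have hlam0 : lam ≠ 0 := ne_of_gt hlam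
  refine le_trans hfinal (le_of_eq ?_)
  unfold Kconst
  rw [← hCc]
  field_simp

lemma form_from_conv {p : ℕ} (M L : Matrix (Fin p) (Fin p) ℝ) (Dr : ℝ) (hDr : 0 < Dr)
    (lam : ℝ) (hlam : 0 < lam) (ε : ℝ) (hε : 0 ≤ ε) (hεp : ε * p ≤ lam)
    (hL : ∀ v : Fin p → ℝ, 2 * lam * ∑ h, v h ^ 2 ≤ v ⬝ᵥ L *ᵥ v)
    (hent : ∀ i k, |(Dr⁻¹ • M) i k - L i k| ≤ ε) :
    ∀ v : Fin p → ℝ, lam * Dr * ∑ h, v h ^ 2 ≤ v ⬝ᵥ M *ᵥ v := by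
  intro v
  have hsq : (0:ℝ) ≤ ∑ h, v h ^ 2 := by positivity
  have hq := quad_err ((Dr⁻¹ • M) - L) ε hε (fun i k => by
    simpa using hent i k) v
  have he : v ⬝ᵥ ((Dr⁻¹ • M) - L) *ᵥ v = Dr⁻¹ * (v ⬝ᵥ M *ᵥ v) - v ⬝ᵥ L *ᵥ v := by
    rw [Matrix.sub_mulVec, dotProduct_sub, Matrix.smul_mulVec, dotProduct_smul,
      smul_eq_mul]
  rw [he] at hq
  have h2 := abs_le.mp hq
  have h3 : ε * p * ∑ h, v h ^ 2 ≤ lam * ∑ h, v h ^ 2 :=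
    mul_le_mul_of_nonneg_right hεp hsq
  have h4 := hL v
  have h5 : lam * ∑ h, v h ^ 2 ≤ Dr⁻¹ * (v ⬝ᵥ M *ᵥ v) := by linarith [h2.1]
  calc lam * Dr * ∑ h, v h ^ 2 = Dr * (lam * ∑ h, v h ^ 2) := by ring
    _ ≤ Dr * (Dr⁻¹ * (v ⬝ᵥ M *ᵥ v)) := mul_le_mul_of_nonneg_left h5 hDr.le
    _ = v ⬝ᵥ M *ᵥ v := by
        rw [← mul_assoc, mul_inv_cancel₀ (ne_of_gt hDr), one_mul]

theorem factor_score_lipschitz_in_loadings {p : ℕ}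
    (A Ah : (D : ℕ) → Matrix (Fin D) (Fin p) ℝ)
    -- rows have Euclidean norm < 1, with `ψ_j² = 1 − ‖a_j‖²` bounded away from 0
    (hrow : ∀ D (j : Fin D), ∑ h, (A D j h) ^ 2 < 1)
    (hrowh : ∀ D (j : Fin D), ∑ h, (Ah D j h) ^ 2 < 1)
    (hδ : ∃ δ > (0:ℝ), ∀ D (j : Fin D),
      δ ≤ 1 - ∑ h, (A D j h) ^ 2 ∧ δ ≤ 1 - ∑ h, (Ah D j h) ^ 2)
    -- realization with bounded average squares
    (z : ℕ → ℝ) (hz : ∃ C : ℝ, ∀ D : ℕ, (D:ℝ)⁻¹ * ∑ j ∈ range D, z j ^ 2 ≤ C)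
    -- `Q_D = A_Dᵀ Ψ_D⁻² A_D` and `Q̂_D = Â_Dᵀ Ψ̂_D⁻² Â_D`
    (Q Qh : ℕ → Matrix (Fin p) (Fin p) ℝ)
    (hQ : ∀ D, Q D = (A D).transpose *
      (Matrix.diagonal fun j : Fin D => (1 - ∑ h, (A D j h) ^ 2)⁻¹) * A D)
    (hQh : ∀ D, Qh D = (Ah D).transpose *
      (Matrix.diagonal fun j : Fin D => (1 - ∑ h, (Ah D j h) ^ 2)⁻¹) * Ah D)
    -- `D⁻¹ Q_D → Q`, `D⁻¹ Q̂_D → Q̂` with positive definite (well-conditioned) limits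
    (Qlim Qhlim : Matrix (Fin p) (Fin p) ℝ)
    (hQconv : Tendsto (fun D : ℕ => ((D:ℝ))⁻¹ • Q D) atTop (nhds Qlim))
    (hQhconv : Tendsto (fun D : ℕ => ((D:ℝ))⁻¹ • Qh D) atTop (nhds Qhlim))
    (hQpd : Qlim.PosDef) (hQhpd : Qhlim.PosDef)
    -- the factor scores as functions of the loading matrix
    (wt wth : (D : ℕ) → Fin p → ℝ)
    (hwt : ∀ D, wt D = ((1 + Q D)⁻¹ * (A D).transpose *
      (Matrix.diagonal fun j : Fin D => (1 - ∑ h, (A D j h) ^ 2)⁻¹)).mulVec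
        (fun j : Fin D => z j))
    (hwth : ∀ D, wth D = ((1 + Qh D)⁻¹ * (Ah D).transpose *
      (Matrix.diagonal fun j : Fin D => (1 - ∑ h, (Ah D j h) ^ 2)⁻¹)).mulVec
        (fun j : Fin D => z j)) :
    ∃ K : ℕ → ℝ, (∃ C : ℝ, ∀ D, |K D| ≤ C) ∧
      ∀ D, Real.sqrt (∑ h, (wth D h - wt D h) ^ 2) ≤
        K D * Real.sqrt ((D:ℝ)⁻¹ * ∑ j : Fin D, ∑ h, (Ah D j h - A D j h) ^ 2) := by
  classical
  rcases Nat.eq_zero_or_pos p with hp0 | hp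
  · subst hp0
    refine ⟨fun _ => 0, ⟨0, fun D => by simp⟩, fun D => ?_⟩
    simp
  obtain ⟨δ, hδ0, hδb⟩ := hδ
  obtain ⟨C, hC⟩ := hz
  have hC0 : 0 ≤ C := by simpa using hC 0
  have hppos : (0:ℝ) < p := by exact_mod_cast hp
  obtain ⟨lamQ, hlamQ, hQlb⟩ := posdef_coercive hp Qlim hQpd
  obtain ⟨lamQh, hlamQh, hQhlb⟩ := posdef_coercive hp Qhlim hQhpd
  set lam : ℝ := min lamQ lamQh / 2 with hlamdef
  have hlam : 0 < lam := by
    have : 0 < min lamQ lamQh := lt_min hlamQ hlamQh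
    positivity
  set ε : ℝ := lam / p with hεdef
  have hε0 : 0 < ε := by positivity
  have hεp : ε * p ≤ lam := by
    rw [hεdef, div_mul_cancel₀ _ (ne_of_gt hppos)]
  -- eventual entrywise closeness
  have hEQ : ∀ᶠ D : ℕ in atTop, ∀ i k : Fin p, |((D:ℝ)⁻¹ • Q D) i k - Qlim i k| < ε := by
    refine Filter.eventually_all.mpr fun i => Filter.eventually_all.mpr fun k => ?_
    have h1 : Tendsto (fun D : ℕ => ((D:ℝ)⁻¹ • Q D) i k) atTop (nhds (Qlim i k)) :=
      (tendsto_pi_nhds.mp ((tendsto_pi_nhds.mp hQconv) i)) k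
    have h2 := Metric.tendsto_nhds.mp h1 ε hε0
    simpa [Real.dist_eq] using h2
  have hEQh : ∀ᶠ D : ℕ in atTop, ∀ i k : Fin p, |((D:ℝ)⁻¹ • Qh D) i k - Qhlim i k| < ε := by
    refine Filter.eventually_all.mpr fun i => Filter.eventually_all.mpr fun k => ?_
    have h1 : Tendsto (fun D : ℕ => ((D:ℝ)⁻¹ • Qh D) i k) atTop (nhds (Qhlim i k)) :=
      (tendsto_pi_nhds.mp ((tendsto_pi_nhds.mp hQhconv) i)) k
    have h2 := Metric.tendsto_nhds.mp h1 ε hε0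
    simpa [Real.dist_eq] using h2
  obtain ⟨N1, hN1⟩ := eventually_atTop.mp hEQ
  obtain ⟨N2, hN2⟩ := eventually_atTop.mp hEQh
  set N : ℕ := max (max N1 N2) 1 with hNdef
  -- the uniform asymptotic bound
  have hbound : ∀ D, N ≤ D → Real.sqrt (∑ h, (wth D h - wt D h) ^ 2) ≤
      Kconst p δ C lam *
        Real.sqrt ((D:ℝ)⁻¹ * ∑ j : Fin D, ∑ h, (Ah D j h - A D j h) ^ 2) := by
    intro D hND
    have hD1 : 0 < D :=
      Nat.lt_of_lt_of_le Nat.zero_lt_one (le_trans (le_max_right _ 1) hND)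
    have hDpos : (0:ℝ) < D := by exact_mod_cast hD1
    have hN1D : N1 ≤ D := le_trans (le_trans (le_max_left N1 N2) (le_max_left _ 1)) hND
    have hN2D : N2 ≤ D := le_trans (le_trans (le_max_right N1 N2) (le_max_left _ 1)) hND
    have hformQ : ∀ v : Fin p → ℝ, lam * D * ∑ h, v h ^ 2 ≤ v ⬝ᵥ Q D *ᵥ v := by
      apply form_from_conv (Q D) Qlim (D:ℝ) hDpos lam hlam ε hε0.le hεp
      · intro v
        have h1 : 2 * lam * ∑ h, v h ^ 2 ≤ lamQ * ∑ h, v h ^ 2 := by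
          apply mul_le_mul_of_nonneg_right _ (by positivity)
          rw [hlamdef]
          have := min_le_left lamQ lamQh
          linarith
        exact le_trans h1 (hQlb v)
      · intro i k
        exact le_of_lt (hN1 D hN1D i k)
    have hformQh : ∀ v : Fin p → ℝ, lam * D * ∑ h, v h ^ 2 ≤ v ⬝ᵥ Qh D *ᵥ v := by
      apply form_from_conv (Qh D) Qhlim (D:ℝ) hDpos lam hlam ε hε0.le hεp
      · intro v
        have h1 : 2 * lam * ∑ h, v h ^ 2 ≤ lamQh * ∑ h, v h ^ 2 := by
          apply mul_le_mul_of_nonneg_right _ (by positivity)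
          rw [hlamdef]
          have := min_le_right lamQ lamQh
          linarith
        exact le_trans h1 (hQhlb v)
      · intro i k
        exact le_of_lt (hN2 D hN2D i k)
    have hzD : ∑ j : Fin D, z j ^ 2 ≤ C * D := by
      have h1 := hC D
      rw [← Fin.sum_univ_eq_sum_range (fun j => z j ^ 2) D] at h1
      calc ∑ j : Fin D, z (j:ℕ) ^ 2
          = (D:ℝ) * ((D:ℝ)⁻¹ * ∑ j : Fin D, z (j:ℕ) ^ 2) := by
            rw [← mul_assoc, mul_inv_cancel₀ (ne_of_gt hDpos), one_mul]
        _ ≤ (D:ℝ) * C := mul_le_mul_of_nonneg_left h1 hDpos.le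
        _ = C * D := by ring
    have hme := main_estimate hD1 (A D) (Ah D) (hrow D) (hrowh D) δ hδ0
      (fun j => (hδb D j).1) (fun j => (hδb D j).2) (fun j : Fin D => z j) C hC0 hzD
      (Q D) (Qh D) (hQ D) (hQh D) lam hlam hformQ hformQh (wt D) (wth D) (hwt D) (hwth D)
    rw [show Real.sqrt (∑ h, (wth D h - wt D h) ^ 2)
      = enorm2 (fun h => wth D h - wt D h) from (enorm2_def _).symm]
    exact hme
  -- vanishing difference when loading matrices agree
  have hzero : ∀ D : ℕ,
      Real.sqrt ((D:ℝ)⁻¹ * ∑ j : Fin D, ∑ h, (Ah D j h - A D j h) ^ 2) = 0 →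
      Real.sqrt (∑ h, (wth D h - wt D h) ^ 2) = 0 := by
    intro D h0
    rcases Nat.eq_zero_or_pos D with hD0 | hD1
    · subst hD0
      have hw : ∀ h, wth 0 h - wt 0 h = 0 := by
        intro h
        rw [hwth 0, hwt 0]
        simp [Matrix.mulVec, dotProduct]
      rw [Finset.sum_eq_zero fun h _ => by rw [hw h]; exact zero_pow two_ne_zero]
      exact Real.sqrt_zero
    · have hDpos : (0:ℝ) < D := by exact_mod_cast hD1
      have hT0 : (0:ℝ) ≤ ∑ j : Fin D, ∑ h, (Ah D j h - A D j h) ^ 2 := by positivity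
      have h1 : (D:ℝ)⁻¹ * ∑ j : Fin D, ∑ h, (Ah D j h - A D j h) ^ 2 ≤ 0 :=
        Real.sqrt_eq_zero'.mp h0
      have h2 : ∑ j : Fin D, ∑ h, (Ah D j h - A D j h) ^ 2 = 0 := by
        have h3 : (0:ℝ) < (D:ℝ)⁻¹ := by positivity
        nlinarith
      have hAE : Ah D = A D := by
        ext j h
        have h4 : ∀ j ∈ (univ : Finset (Fin D)),
            ∑ h, (Ah D j h - A D j h) ^ 2 = 0 :=
          (Finset.sum_eq_zero_iff_of_nonneg (fun j _ => by positivity)).mp h2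
        have h5 : ∀ h ∈ (univ : Finset (Fin p)), (Ah D j h - A D j h) ^ 2 = 0 :=
          (Finset.sum_eq_zero_iff_of_nonneg (fun h _ => sq_nonneg _)).mp
            (h4 j (mem_univ j))
        have h6 := h5 h (mem_univ h)
        have h7 : Ah D j h - A D j h = 0 := by
          exact pow_eq_zero_iff two_ne_zero |>.mp h6
        linarith
      have hQE : Qh D = Q D := by rw [hQh D, hQ D, hAE]
      have hwE : wth D = wt D := by rw [hwth D, hwt D, hAE, hQE]
      rw [Finset.sum_eq_zero fun h _ => by rw [hwE]; ring]
      exact Real.sqrt_zero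
  -- assemble K
  set K : ℕ → ℝ := fun D =>
    if Real.sqrt ((D:ℝ)⁻¹ * ∑ j : Fin D, ∑ h, (Ah D j h - A D j h) ^ 2) = 0 then 0
    else Real.sqrt (∑ h, (wth D h - wt D h) ^ 2) /
      Real.sqrt ((D:ℝ)⁻¹ * ∑ j : Fin D, ∑ h, (Ah D j h - A D j h) ^ 2) with hKdef
  have hK0 : ∀ D, 0 ≤ K D := by
    intro D
    rw [hKdef]
    dsimp only
    split_ifs with h0
    · exact le_refl 0
    · exact div_nonneg (Real.sqrt_nonneg _) (Real.sqrt_nonneg _)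
  have hKle : ∀ D, N ≤ D → K D ≤ Kconst p δ C lam := by
    intro D hND
    rw [hKdef]
    dsimp only
    split_ifs with h0
    · exact Kconst_nonneg p hδ0 hC0 hlam
    · rw [div_le_iff₀ (lt_of_le_of_ne (Real.sqrt_nonneg _) (Ne.symm h0))]
      exact hbound D hND
  refine ⟨K, ⟨Kconst p δ C lam + ∑ d ∈ range N, K d, ?_⟩, ?_⟩
  · intro D
    rw [abs_of_nonneg (hK0 D)]
    rcases le_or_gt N D with h | h
    · have h1 : 0 ≤ ∑ d ∈ range N, K d := Finset.sum_nonneg fun d _ => hK0 d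
      linarith [hKle D h]
    · have h1 : K D ≤ ∑ d ∈ range N, K d :=
        Finset.single_le_sum (fun d _ => hK0 d) (Finset.mem_range.mpr h)
      have h2 := Kconst_nonneg p hδ0 hC0 hlam
      linarith
  · intro D
    rw [hKdef]
    dsimp only
    split_ifs with h0
    · rw [hzero D h0, zero_mul]
    · exact le_of_eq (div_mul_cancel₀ _ h0).symm
end

section
/- In the Gaussian bi-factor model with G groups, write the D×(G+1) loading matrix A = [a₀, a₁,…,a_G] in block form with global loading blocks b_{01},…,b_{0G} and group loading vectors b₁,…,b_G (so A = [[b₀₁, b₁, 0], [b_{0r}, 0, B_r]] where b_{0r} = (b₀₂ᵀ,…,b_{0G}ᵀ)ᵀ and B_r = diag(b₂,…,b_G)), with Ψ² = diag(Ψ₁², Ψ_r²) having strictly positive diagonal. Let Σ_D = A Aᵀ + Ψ² be the correlation matrix of Z_D, M = Σ_D⁻¹, Σ₁ = [[b₀₁b₀₁ᵀ + b₁b₁ᵀ + Ψ₁², b₀₁], [b₀₁ᵀ, 1]] be the correlation matrix of (Z₁ᵀ, W₀), and N = Σ₁⁻¹ with blocks N₁₁ (d₁×d₁) and N₁₂ (d₁×1).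 Then for every z_D = (z₁ᵀ, z_rᵀ)ᵀ ∈ ℝ^D, the two-stage factor scores coincide with the regression factor scores: w̃₀ := a₀ᵀ M z_D equals ŵ₀ = E(W₀ | Z_D = z_D), and b₁ᵀ N₁₁ z₁ + (b₁ᵀ N₁₂) · (a₀ᵀ M z_D) = a₁ᵀ M z_D, i.e., w̃₁(w̃₀) = ŵ₁ = E(W₁ | Z_D = z_D). Equivalently, the block matrix identities (a) N₁₁ + N₁₂(b₀₁ᵀ M₁₁ + b_{0r}ᵀ M₂₁) = M₁₁ and (b) N₁₂(b₀₁ᵀ M₁₂ + b_{0r}ᵀ M₂₂) = M₁₂ hold, where M is partitioned into blocks M₁₁, M₁₂, M₂₁, M₂₂ conformably with (z₁, z_r). -/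
/-!
With `P = diag(I, b_{0r}ᵀ)`, the rows of `Σ₁ P` are the `Z₁`-rows of `Σ_D` followed by `a₀ᵀ`
(the covariance of `W₀` with `Z_D`): `Σ₁ P = J Σ_D + e a₀ᵀ`, where `J` keeps the `Z₁`-coordinates
and `e` is the `W₀`-coordinate. Multiplying by `N` on the left and by `M` on the right gives
`P M = N (J + e a₀ᵀ M)`, whose `Z₁`-rows are the block identities (a) and (b); applied to `z` they
give the equality of the scores. The inverses exist because `Σ_D = A Aᵀ + Ψ²` is positive definite
and the Schur complement of the unit block of `Σ₁` is `b₁ b₁ᵀ + Ψ₁²`.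
-/

open Matrix

theorem posDef_mul_transpose_add_diagonal {m n : Type*} [Fintype m] [Fintype n] [DecidableEq m]
    (A : Matrix m n ℝ) {d : m → ℝ} (hd : ∀ i, 0 < d i) : (A * Aᵀ + diagonal d).PosDef :=
  PosDef.posSemidef_add (posSemidef_self_mul_conjTranspose A) (.diagonal hd)

theorem mul_eq_leftInv_mul_of_mul_eq_mul_add {R : Type*} [Ring R] {l n : Type*}
    [Fintype l] [Fintype n] [DecidableEq l] [DecidableEq n]
    {S₁ N : Matrix l l R} {S M : Matrix n n R} {P J K : Matrix l n R}
    (hN : N * S₁ = 1) (hM : S * M = 1) (h : S₁ * P = J * S + K) :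
    P * M = N * (J + K * M) :=
  calc P * M = N * S₁ * P * M := by rw [hN, Matrix.one_mul]
    _ = N * (J * S + K) * M := by rw [Matrix.mul_assoc N, h]
    _ = N * (J + K * M) := by
      rw [Matrix.mul_assoc, Matrix.add_mul, Matrix.mul_assoc, hM, Matrix.mul_one]

section Bifactor

variable {d1 dr G' : ℕ} (b01 b1 : Fin d1 → ℝ) (b0r : Fin dr → ℝ) (Br : Matrix (Fin dr) (Fin G') ℝ)

def bifactorLoadings : Matrix (Fin d1 ⊕ Fin dr) (Unit ⊕ (Unit ⊕ Fin G')) ℝ :=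
  fromCols (replicateCol Unit (Sum.elim b01 b0r)) (fromBlocks (replicateCol Unit b1) 0 0 Br)

theorem fromBlocks_eq_bifactorLoadings_mul_transpose_add_diagonal
    (ψ1 : Fin d1 → ℝ) (ψr : Fin dr → ℝ) :
    fromBlocks (vecMulVec b01 b01 + vecMulVec b1 b1 + diagonal (fun i => ψ1 i ^ 2))
      (vecMulVec b01 b0r) (vecMulVec b0r b01)
      (vecMulVec b0r b0r + Br * Brᵀ + diagonal (fun i => ψr i ^ 2)) =
    bifactorLoadings b01 b1 b0r Br * (bifactorLoadings b01 b1 b0r Br)ᵀ +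
      diagonal (Sum.elim (fun i => ψ1 i ^ 2) (fun i => ψr i ^ 2)) := by
  rw [bifactorLoadings, transpose_fromCols, fromCols_mul_fromRows, fromBlocks_transpose,
    fromBlocks_multiply, ← fromBlocks_diagonal]
  ext (i | i) (j | j) <;> simp [← vecMulVec_eq, vecMulVec_apply, diagonal_apply, add_assoc]

end Bifactor

theorem det_fromBlocks_replicateCol_replicateRow_one_pos {m : Type*} [Fintype m] [DecidableEq m]
    {A : Matrix m m ℝ} {b : m → ℝ} (h : (A - vecMulVec b b).PosDef) :
    0 < (fromBlocks A (replicateCol Unit b) (replicateRow Unit b) 1).det := by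
  rw [det_fromBlocks_one₂₂, ← vecMulVec_eq]
  exact h.det_pos

theorem fromBlocks_mul_fromBlocks_one_replicateRow {d1 dr : ℕ}
    (S11 : Matrix (Fin d1) (Fin d1) ℝ) (S22 : Matrix (Fin dr) (Fin dr) ℝ)
    (b01 : Fin d1 → ℝ) (b0r : Fin dr → ℝ) :
    fromBlocks S11 (replicateCol Unit b01) (replicateRow Unit b01) (1 : Matrix Unit Unit ℝ) *
        fromBlocks (1 : Matrix (Fin d1) (Fin d1) ℝ) 0 0 (replicateRow Unit b0r) =
      fromBlocks (1 : Matrix (Fin d1) (Fin d1) ℝ) 0 0 (0 : Matrix Unit (Fin dr) ℝ) *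
        fromBlocks S11 (vecMulVec b01 b0r) (vecMulVec b0r b01) S22 +
        fromBlocks 0 0 (replicateRow Unit b01) (replicateRow Unit b0r) := by
  simp [fromBlocks_multiply, fromBlocks_add, vecMulVec_eq Unit]

section InverseRows

variable {d1 dr : ℕ} {b01 : Fin d1 → ℝ} {b0r : Fin dr → ℝ}
  {S11 : Matrix (Fin d1) (Fin d1) ℝ} {S22 : Matrix (Fin dr) (Fin dr) ℝ}
  {M : Matrix (Fin d1 ⊕ Fin dr) (Fin d1 ⊕ Fin dr) ℝ} {N : Matrix (Fin d1 ⊕ Unit) (Fin d1 ⊕ Unit) ℝ}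

theorem bifactor_inv_inl_row
    (hM : fromBlocks S11 (vecMulVec b01 b0r) (vecMulVec b0r b01) S22 * M = 1)
    (hN : N * fromBlocks S11 (replicateCol Unit b01) (replicateRow Unit b01) 1 = 1)
    (i : Fin d1) (c : Fin d1 ⊕ Fin dr) :
    M (Sum.inl i) c = Sum.elim (fun k => N (Sum.inl i) (Sum.inl k)) 0 c +
      N (Sum.inl i) (Sum.inr ()) * (Sum.elim b01 b0r ᵥ* M) c := by
  have h := congrFun₂ (mul_eq_leftInv_mul_of_mul_eq_mul_add hN hM
    (fromBlocks_mul_fromBlocks_one_replicateRow S11 S22 b01 b0r)) (Sum.inl i) c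
  rcases c with k | k <;>
    simpa [mul_apply, Fintype.sum_sum_type, vecMul, dotProduct, one_apply] using h

theorem bifactor_inv_block_identity₁₁
    (hM : fromBlocks S11 (vecMulVec b01 b0r) (vecMulVec b0r b01) S22 * M = 1)
    (hN : N * fromBlocks S11 (replicateCol Unit b01) (replicateRow Unit b01) 1 = 1)
    (i k : Fin d1) :
    N (Sum.inl i) (Sum.inl k) + N (Sum.inl i) (Sum.inr ()) *
        ((∑ l, b01 l * M (Sum.inl l) (Sum.inl k)) + (∑ l, b0r l * M (Sum.inr l) (Sum.inl k))) =
      M (Sum.inl i) (Sum.inl k) := by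
  simp [bifactor_inv_inl_row hM hN i, vecMul, dotProduct, Fintype.sum_sum_type]

theorem bifactor_inv_block_identity₁₂
    (hM : fromBlocks S11 (vecMulVec b01 b0r) (vecMulVec b0r b01) S22 * M = 1)
    (hN : N * fromBlocks S11 (replicateCol Unit b01) (replicateRow Unit b01) 1 = 1)
    (i : Fin d1) (k : Fin dr) :
    N (Sum.inl i) (Sum.inr ()) *
        ((∑ l, b01 l * M (Sum.inl l) (Sum.inr k)) + (∑ l, b0r l * M (Sum.inr l) (Sum.inr k))) =
      M (Sum.inl i) (Sum.inr k) := by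
  simp [bifactor_inv_inl_row hM hN i, vecMul, dotProduct, Fintype.sum_sum_type]

theorem bifactor_inv_mulVec_inl
    (hM : fromBlocks S11 (vecMulVec b01 b0r) (vecMulVec b0r b01) S22 * M = 1)
    (hN : N * fromBlocks S11 (replicateCol Unit b01) (replicateRow Unit b01) 1 = 1)
    (z : Fin d1 ⊕ Fin dr → ℝ) (i : Fin d1) :
    (M *ᵥ z) (Sum.inl i) = ∑ k, N (Sum.inl i) (Sum.inl k) * z (Sum.inl k) +
      N (Sum.inl i) (Sum.inr ()) * (Sum.elim b01 b0r ⬝ᵥ M *ᵥ z) := by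
  calc (M *ᵥ z) (Sum.inl i) = ∑ c, M (Sum.inl i) c * z c := rfl
    _ = ∑ c, (Sum.elim (fun k => N (Sum.inl i) (Sum.inl k)) 0 c * z c +
          N (Sum.inl i) (Sum.inr ()) * ((Sum.elim b01 b0r ᵥ* M) c * z c)) := by
      simp_rw [bifactor_inv_inl_row hM hN i, add_mul, mul_assoc]
    _ = _ := by
      rw [Finset.sum_add_distrib, ← Finset.mul_sum, dotProduct_mulVec]
      simp [dotProduct, Fintype.sum_sum_type]

theorem bifactor_twoStage_score_eq
    (hM : fromBlocks S11 (vecMulVec b01 b0r) (vecMulVec b0r b01) S22 * M = 1)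
    (hN : N * fromBlocks S11 (replicateCol Unit b01) (replicateRow Unit b01) 1 = 1)
    (b1 : Fin d1 → ℝ) (z : Fin d1 ⊕ Fin dr → ℝ) :
    (∑ i, ∑ k, b1 i * N (Sum.inl i) (Sum.inl k) * z (Sum.inl k)) +
        (∑ i, b1 i * N (Sum.inl i) (Sum.inr ())) * (Sum.elim b01 b0r ⬝ᵥ M *ᵥ z) =
      Sum.elim b1 (fun _ => (0 : ℝ)) ⬝ᵥ M *ᵥ z := by
  have h : Sum.elim b1 (fun _ => (0 : ℝ)) ⬝ᵥ M *ᵥ z = ∑ i, b1 i * (M *ᵥ z) (Sum.inl i) := by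
    simp [dotProduct, Fintype.sum_sum_type]
  simp only [h, bifactor_inv_mulVec_inl hM hN z, mul_add, Finset.sum_add_distrib, Finset.mul_sum,
    Finset.sum_mul, mul_assoc]

end InverseRows

theorem bifactor_two_stage_equals_regression_scores {d1 dr G' : ℕ}
    (b01 b1 : Fin d1 → ℝ) (b0r : Fin dr → ℝ) (Br : Matrix (Fin dr) (Fin G') ℝ)
    (ψ1 : Fin d1 → ℝ) (ψr : Fin dr → ℝ)
    (hψ1 : ∀ i, 0 < ψ1 i) (hψr : ∀ i, 0 < ψr i)
    -- `Σ₁₁`, `Σ₂₂` and the full correlation matrix `Σ_D` of `Z_D`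
    (S11 : Matrix (Fin d1) (Fin d1) ℝ)
    (hS11 : S11 = vecMulVec b01 b01 + vecMulVec b1 b1 +
      Matrix.diagonal (fun i => ψ1 i ^ 2))
    (S22 : Matrix (Fin dr) (Fin dr) ℝ)
    (hS22 : S22 = vecMulVec b0r b0r + Br * Br.transpose +
      Matrix.diagonal (fun i => ψr i ^ 2))
    (SD : Matrix (Fin d1 ⊕ Fin dr) (Fin d1 ⊕ Fin dr) ℝ)
    (hSD : SD = Matrix.fromBlocks S11 (vecMulVec b01 b0r) (vecMulVec b0r b01) S22)
    (M : Matrix (Fin d1 ⊕ Fin dr) (Fin d1 ⊕ Fin dr) ℝ) (hM : M = SD⁻¹)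
    -- `Σ₁`, the correlation matrix of `(Z₁ᵀ, W₀)`, and `N = Σ₁⁻¹`
    (S1 : Matrix (Fin d1 ⊕ Unit) (Fin d1 ⊕ Unit) ℝ)
    (hS1 : S1 = Matrix.fromBlocks S11 (Matrix.of fun i (_ : Unit) => b01 i)
      (Matrix.of fun (_ : Unit) j => b01 j) 1)
    (N : Matrix (Fin d1 ⊕ Unit) (Fin d1 ⊕ Unit) ℝ) (hN : N = S1⁻¹) :
    -- the two-stage factor score for `W₁` equals the regression factor score
    (∀ z : Fin d1 ⊕ Fin dr → ℝ,
      (∑ i, ∑ k, b1 i * N (Sum.inl i) (Sum.inl k) * z (Sum.inl k)) +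
        (∑ i, b1 i * N (Sum.inl i) (Sum.inr ())) *
          (Sum.elim b01 b0r ⬝ᵥ M.mulVec z) =
        Sum.elim b1 (fun _ => (0:ℝ)) ⬝ᵥ M.mulVec z) ∧
    -- block identity (a): `N₁₁ + N₁₂ (b₀₁ᵀ M₁₁ + b_{0r}ᵀ M₂₁) = M₁₁`
    (∀ (i k : Fin d1),
      N (Sum.inl i) (Sum.inl k) + N (Sum.inl i) (Sum.inr ()) *
        ((∑ l, b01 l * M (Sum.inl l) (Sum.inl k)) +
         (∑ l, b0r l * M (Sum.inr l) (Sum.inl k))) = M (Sum.inl i) (Sum.inl k)) ∧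
    -- block identity (b): `N₁₂ (b₀₁ᵀ M₁₂ + b_{0r}ᵀ M₂₂) = M₁₂`
    (∀ (i : Fin d1) (k : Fin dr),
      N (Sum.inl i) (Sum.inr ()) *
        ((∑ l, b01 l * M (Sum.inl l) (Sum.inr k)) +
         (∑ l, b0r l * M (Sum.inr l) (Sum.inr k))) = M (Sum.inl i) (Sum.inr k)) := by
  have hSD_pos : SD.PosDef := by
    rw [hSD, hS11, hS22, fromBlocks_eq_bifactorLoadings_mul_transpose_add_diagonal]
    exact posDef_mul_transpose_add_diagonal _ <| Sum.forall.2
      ⟨fun i => pow_pos (hψ1 i) 2, fun i => pow_pos (hψr i) 2⟩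
  have hS1_pos : 0 < S1.det := by
    have hschur : S11 - vecMulVec b01 b01 =
        replicateCol Unit b1 * (replicateCol Unit b1)ᵀ + diagonal (fun i => ψ1 i ^ 2) := by
      rw [hS11, transpose_replicateCol, ← vecMulVec_eq]
      abel
    rw [hS1]
    exact det_fromBlocks_replicateCol_replicateRow_one_pos
      (hschur ▸ posDef_mul_transpose_add_diagonal _ fun i => pow_pos (hψ1 i) 2)
  have hMSD : SD * M = 1 := hM ▸ mul_nonsing_inv SD hSD_pos.det_pos.ne'.isUnit
  have hNS1 : N * S1 = 1 := hN ▸ nonsing_inv_mul S1 hS1_pos.ne'.isUnit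
  rw [hSD] at hMSD
  rw [hS1] at hNS1
  exact ⟨bifactor_twoStage_score_eq hMSD hNS1 b1, bifactor_inv_block_identity₁₁ hMSD hNS1,
    bifactor_inv_block_identity₁₂ hMSD hNS1⟩
end
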